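/- arXiv:2205.08869 — 5 statements merged into one kernel-verified Lean document; each statement's English description precedes it below -/
import Mathlib

section
/- Let η be a triangular weakly non-linear update over ℤ^d, i.e., η(x_i) = c_i·x_i + p_i with c_i ∈ ℤ and p_i ∈ ℤ[x_{i+1},...,x_d] for all 1 ≤ i ≤ d. Then the composed update η∘η is triangular weakly non-linear with non-negative coefficients: for every 1 ≤ i ≤ d there exists p_i' ∈ ℤ[x_{i+1},...,x_d] with (η∘η)(x_i) = c_i²·x_i + p_i', and c_i² ≥ 0. In particular, chaining a twn-update with itself yields a tnn-update. -/
open scoped Classical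

noncomputable section

namespace Koat

/-! ### Formulas over polynomial atoms `p < q` -/

inductive Fml (V : Type*) where
  | lt  : MvPolynomial V ℤ → MvPolynomial V ℤ → Fml V
  | and : Fml V → Fml V → Fml V
  | or  : Fml V → Fml V → Fml V

namespace Fml

variable {V : Type*}

/-- A formula holds in a state `σ : V → ℤ`. -/
def holds (σ : V → ℤ) : Fml V → Prop
  | .lt p q  => MvPolynomial.eval σ p < MvPolynomial.eval σ q
  | .and f g => holds σ f ∧ holds σ g
  | .or f g  => holds σ f ∨ holds σ g

/-- Applying an update `η` to a formula (substituting `η v` for each variable `v`). -/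
def subst (η : V → MvPolynomial V ℤ) : Fml V → Fml V
  | .lt p q  => .lt (MvPolynomial.bind₁ η p) (MvPolynomial.bind₁ η q)
  | .and f g => .and (subst η f) (subst η g)
  | .or f g  => .or (subst η f) (subst η g)

/-- The variables occurring in a formula. -/
def vars : Fml V → Finset V
  | .lt p q  => p.vars ∪ q.vars
  | .and f g => vars f ∪ vars g
  | .or f g  => vars f ∪ vars g

/-- The list of atoms `(s₁, s₂)` (meaning `s₁ < s₂`) occurring in a formula. -/
def atoms : Fml V → List (MvPolynomial V ℤ × MvPolynomial V ℤ)
  | .lt p q  => [(p, q)]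
  | .and f g => atoms f ++ atoms g
  | .or f g  => atoms f ++ atoms g

end Fml

/-! ### Bounds -/

/-- The set `𝓑` of bounds: built from `ℕ ∪ {ω}`, variables, `+`, `·`, `k^{·}`. -/
inductive Bnd (V : Type*) where
  | const : ℕ∞ → Bnd V
  | var : V → Bnd V
  | add : Bnd V → Bnd V → Bnd V
  | mul : Bnd V → Bnd V → Bnd V
  | exp : ℕ → Bnd V → Bnd V

/-- `k ^ e` for `e : ℕ∞`. -/
def epow (k : ℕ) (e : ℕ∞) : ℕ∞ := if e = ⊤ then ⊤ else ((k ^ e.toNat : ℕ) : ℕ∞)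

namespace Bnd

variable {V : Type*}

/-- Evaluation of a bound in a (non-negative) state, with values in `ℕ ∪ {ω}`. -/
def eval (σ : V → ℕ) : Bnd V → ℕ∞
  | .const c => c
  | .var v => (σ v : ℕ∞)
  | .add b₁ b₂ => eval σ b₁ + eval σ b₂
  | .mul b₁ b₂ => eval σ b₁ * eval σ b₂
  | .exp k b => epow k (eval σ b)

/-- `b [v / f v | v ∈ PV]`: substitute the bound `f v` for every program variable `v ∈ PV`. -/
def substOn (PV : Set V) (f : V → Bnd V) : Bnd V → Bnd V
  | .const c => .const c
  | .var v => if v ∈ PV then f v else .var v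
  | .add b₁ b₂ => .add (substOn PV f b₁) (substOn PV f b₂)
  | .mul b₁ b₂ => .mul (substOn PV f b₁) (substOn PV f b₂)
  | .exp k b => .exp k (substOn PV f b)

end Bnd

/-- The sum of a list of bounds. -/
def bndSum {V : Type*} (l : List (Bnd V)) : Bnd V := l.foldr Bnd.add (Bnd.const 0)

/-! ### Integer programs -/

/-- A transition `(ℓ, φ, η, ℓ')`. -/
structure Trans (L V : Type*) where
  src : L
  guard : Fml V
  update : V → MvPolynomial V ℤ
  tgt : L

/-- A configuration `(ℓ, σ)`. -/
abbrev Config (L V : Type*) := L × (V → ℤ)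

/-- The evaluation step `(ℓ, σ) →_t (ℓ', σ')`: program variables are updated by `t.update`,
temporary variables (those outside `PV`) get arbitrary values. -/
def Step {L V : Type*} (PV : Set V) (t : Trans L V) (c c' : Config L V) : Prop :=
  c.1 = t.src ∧ c'.1 = t.tgt ∧ t.guard.holds c.2 ∧
    ∀ v ∈ PV, c'.2 v = MvPolynomial.eval c.2 (t.update v)

/-- `→_S`, the union of `→_t` over `t ∈ S`. -/
def StepAny {L V : Type*} (PV : Set V) (S : Finset (Trans L V)) :
    Config L V → Config L V → Prop :=
  fun c c' => ∃ t ∈ S, Step PV t c c'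

/-- `k`-fold composition of a relation. -/
def relPow {α : Type*} (R : α → α → Prop) : ℕ → α → α → Prop
  | 0 => Eq
  | n + 1 => Relation.Comp (relPow R n) R

/-- `→*_S ∘ →_t`. -/
def starThen {L V : Type*} (PV : Set V) (S : Finset (Trans L V)) (t : Trans L V) :
    Config L V → Config L V → Prop :=
  Relation.Comp (Relation.ReflTransGen (StepAny PV S)) (Step PV t)

/-- `|σ|`, the state of absolute values. -/
def absState {V : Type*} (σ : V → ℤ) : V → ℕ := fun v => (σ v).natAbs

/-- `RB` is a global runtime bound for the program `(PV, L, ℓ₀, T)`. -/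
def IsGlobalRB {L V : Type*} (PV : Set V) (ℓ₀ : L) (T : Finset (Trans L V))
    (RB : Trans L V → Bnd V) : Prop :=
  ∀ t ∈ T, ∀ σ₀ : V → ℤ,
    (⨆ k ∈ {k : ℕ | ∃ c' : Config L V, relPow (starThen PV T t) k (ℓ₀, σ₀) c'}, (k : ℕ∞))
      ≤ (RB t).eval (absState σ₀)

/-- `SB` is a size bound for the program `(PV, L, ℓ₀, T)`. -/
def IsSizeBound {L V : Type*} (PV : Set V) (ℓ₀ : L) (T : Finset (Trans L V))
    (SB : Trans L V → V → Bnd V) : Prop :=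
  ∀ t ∈ T, ∀ v ∈ PV, ∀ σ₀ : V → ℤ,
    (⨆ s ∈ {s : ℕ | ∃ c' : Config L V, starThen PV T t (ℓ₀, σ₀) c' ∧ s = (c'.2 v).natAbs},
      (s : ℕ∞)) ≤ (SB t v).eval (absState σ₀)

/-- The entry transitions `E_{T'}`. -/
def entrySet {L V : Type*} (T T' : Finset (Trans L V)) : Set (Trans L V) :=
  {t | t ∈ T ∧ t ∉ T' ∧ ∃ t' ∈ T', t'.src = t.tgt}

/-- `RB` is a local runtime bound for `T'gt` w.r.t. `T'` in the program `(PV, L, ℓ₀, T)`. -/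
def IsLocalRB {L V : Type*} (PV : Set V) (ℓ₀ : L) (T T'gt T' : Finset (Trans L V))
    (RB : Trans L V → Bnd V) : Prop :=
  ∀ t ∈ T'gt, ∀ r ∈ entrySet T T', ∀ σ : V → ℤ,
    (⨆ k ∈ {k : ℕ | ∃ (σ₀ : V → ℤ) (c' : Config L V),
        starThen PV T r (ℓ₀, σ₀) (r.tgt, σ) ∧ relPow (starThen PV T' t) k (r.tgt, σ) c'},
      (k : ℕ∞)) ≤ (RB r).eval (absState σ)

/-- Chaining two transitions: `t₁ ⋆ t₂`. -/
def chain2 {L V : Type*} (t₁ t₂ : Trans L V) : Trans L V :=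
  ⟨t₁.src, (t₁.guard).and (t₂.guard.subst t₁.update),
    fun v => MvPolynomial.bind₁ t₁.update (t₂.update v), t₂.tgt⟩

/-- Chaining a (nonempty) list of transitions `t₁ ⋆ ⋯ ⋆ tₙ` (with a default for `[]`). -/
def chainFold {L V : Type*} (dflt : Trans L V) : List (Trans L V) → Trans L V
  | [] => dflt
  | t :: ts => ts.foldl chain2 t

/-- The composed evaluation relation `→_{t₁} ∘ ⋯ ∘ →_{tₙ}`. -/
def stepsList {L V : Type*} (PV : Set V) : List (Trans L V) → Config L V → Config L V → Prop
  | [] => Eq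
  | t :: ts => Relation.Comp (Step PV t) (stepsList PV ts)

/-! ### Twn-loops -/

/-- An update `η` as a function on states `ℤ^d → ℤ^d`. -/
def updFun {d : ℕ} (η : Fin d → MvPolynomial (Fin d) ℤ) (σ : Fin d → ℤ) : Fin d → ℤ :=
  fun i => MvPolynomial.eval σ (η i)

/-- `η` is triangular weakly non-linear with data `c`, `p`:
`η xᵢ = cᵢ·xᵢ + pᵢ` with `pᵢ ∈ ℤ[x_{i+1},…,x_d]`. -/
def IsTriangular {d : ℕ} (η : Fin d → MvPolynomial (Fin d) ℤ) (c : Fin d → ℤ)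
    (p : Fin d → MvPolynomial (Fin d) ℤ) : Prop :=
  ∀ i, η i = MvPolynomial.C (c i) * MvPolynomial.X i + p i ∧ ∀ j ∈ (p i).vars, i < j

/-- Triangular weakly non-linear update. -/
def IsTWN {d : ℕ} (η : Fin d → MvPolynomial (Fin d) ℤ) : Prop :=
  ∃ c p, IsTriangular η c p

/-- Triangular weakly non-linear update with non-negative coefficients. -/
def IsTNN {d : ℕ} (η : Fin d → MvPolynomial (Fin d) ℤ) : Prop :=
  ∃ c p, IsTriangular η c p ∧ ∀ i, 0 ≤ c i

/-- `(b₁,a₁) >_lex (b₂,a₂)`. -/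
def lexGt (b₁ a₁ b₂ a₂ : ℕ) : Prop := b₂ < b₁ ∨ (b₁ = b₂ ∧ a₂ < a₁)

/-- The set of all valid `k`-monotonicity thresholds of `(b₁,a₁)` and `(b₂,a₂)`. -/
def mthSet (k b₁ a₁ b₂ a₂ : ℕ) : Set ℕ :=
  {n₀ | ∀ n ≥ n₀, k * (n ^ a₂ * b₂ ^ n) < n ^ a₁ * b₁ ^ n}

/-- The `k`-monotonicity threshold of `(b₁,a₁)` and `(b₂,a₂)` (the smallest member of
`mthSet`, when it exists). -/
def mth (k b₁ a₁ b₂ a₂ : ℕ) : ℕ := sInf (mthSet k b₁ a₁ b₂ a₂)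

/-- `M_j` as in the paper. -/
def Mdef (b a : ℕ → ℕ) (j : ℕ) : ℕ :=
  if b j = b (j - 1) then 0 else mth 1 (b j) (a j) (b (j - 1)) (a (j - 1) + 1)

/-- `N_j` as in the paper. -/
def Ndef (b a : ℕ → ℕ) (j : ℕ) : ℕ :=
  if j = 2 then 1
  else if j = 3 then mth 1 (b 2) (a 2) (b 1) (a 1)
  else
    max ((Finset.Icc 1 (j - 3)).sup fun i => mth 1 (b (j - 2)) (a (j - 2)) (b i) (a i))
      (mth (j - 2) (b (j - 1)) (a (j - 1)) (b (j - 2)) (a (j - 2)))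

/-- The over-approximation `⊔ {p j | j ∈ s}`: each monomial gets the maximal absolute value
of its coefficients in the `p j`. -/
def sqcupF {d : ℕ} {ι : Type*} (s : Finset ι) (p : ι → MvPolynomial (Fin d) ℤ) :
    MvPolynomial (Fin d) ℤ :=
  ∑ m ∈ s.biUnion fun j => (p j).support,
    MvPolynomial.monomial m (((s.sup fun j => ((p j).coeff m).natAbs : ℕ) : ℤ))

/-- Normalized poly-exponential expressions, as finite (formal) sums of
`p · n^a · b^n` with `p ∈ ℚ[x₁,…,x_d]`. -/
abbrev NPE (d : ℕ) := List (MvPolynomial (Fin d) ℚ × ℕ × ℕ)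

/-- The value of a normalized poly-exponential expression at `(e, n)`. -/
def evalNPE {d : ℕ} (l : NPE d) (e : Fin d → ℤ) (n : ℕ) : ℚ :=
  (l.map fun tr =>
    MvPolynomial.eval (fun i => (e i : ℚ)) tr.1 * (n : ℚ) ^ tr.2.1 * (tr.2.2 : ℚ) ^ n).sum


/-- chaining a twn-update with itself yields a tnn-update:
`(η∘η)(xᵢ) = cᵢ²·xᵢ + pᵢ'` with `pᵢ' ∈ ℤ[x_{i+1},…,x_d]` and `cᵢ² ≥ 0`. -/
theorem twn_chain_is_tnn {d : ℕ} (η : Fin d → MvPolynomial (Fin d) ℤ)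
    (c : Fin d → ℤ) (p : Fin d → MvPolynomial (Fin d) ℤ)
    (htwn : IsTriangular η c p) :
    ∀ i : Fin d, ∃ p' : MvPolynomial (Fin d) ℤ,
      MvPolynomial.bind₁ η (η i) = MvPolynomial.C ((c i) ^ 2) * MvPolynomial.X i + p' ∧
      (∀ j ∈ p'.vars, i < j) ∧ 0 ≤ (c i) ^ 2 := by
  intro i
  obtain ⟨hi, hv⟩ := htwn i
  refine ⟨MvPolynomial.C (c i) * p i + MvPolynomial.bind₁ η (p i), ?_, ?_, sq_nonneg _⟩
  · conv_lhs => rw [hi]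
    simp only [map_add, map_mul, MvPolynomial.bind₁_C_right, MvPolynomial.bind₁_X_right, hi]
    rw [MvPolynomial.C_pow]; ring
  · intro j hj
    have := MvPolynomial.vars_add_subset _ _ hj
    rw [Finset.mem_union] at this
    rcases this with h | h
    · rcases Finset.mem_union.mp (MvPolynomial.vars_mul _ _ h) with h | h
      · rw [MvPolynomial.vars_C] at h; exact absurd h (Finset.notMem_empty j)
      · exact hv j h
    · obtain ⟨k, hk, hjk⟩ := MvPolynomial.mem_vars_bind₁ _ _ h
      have hik := hv k hk
      obtain ⟨hk2, hv2⟩ := htwn k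
      rw [hk2] at hjk
      have := MvPolynomial.vars_add_subset _ _ hjk
      rw [Finset.mem_union] at this
      rcases this with h' | h'
      · rcases Finset.mem_union.mp (MvPolynomial.vars_mul _ _ h') with h'' | h''
        · rw [MvPolynomial.vars_C] at h''; exact absurd h'' (Finset.notMem_empty j)
        · rw [MvPolynomial.vars_X] at h''
          have : j = k := by simpa using h''
          omega
      · exact lt_trans hik (hv2 j h')


end Koat
end
end

section
/- Let ψ be a predicate on ℤ^d and let npe = Σ_{(p,a,b)∈Λ} p·n^a·b^n be a normalized poly-exponential expression, where Λ is a finite set of triples consisting of a monomial p with rational coefficient in x1,...,xd and numbers a ∈ ℕ, b ∈ ℕ_{≥1}. Let Δ, Γ ⊆ Λ be disjoint subsets such that for every e ∈ ℤ^d satisfying ψ: p(e) > 0 for all (p,a,b) ∈ Δ, and p(e) ≤ 0 for all (p,a,b) ∈ Γ. For each (p,a,b) ∈ Δ∪Γ choose i_{(p,a,b)}, j_{(p,a,b)} ∈ ℕ such that (j_{(p,a,b)}, i_{(p,a,b)}) >lex (b,a) if (p,a,b) ∈ Δ, and (b,a) >lex (j_{(p,a,b)}, i_{(p,a,b)}) if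 (p,a,b) ∈ Γ. Define the over-approximation ⌈npe⌉_ψ^{Δ,Γ} = Σ_{(p,a,b)∈Δ∪Γ} p·n^{i_{(p,a,b)}}·j_{(p,a,b)}^n + Σ_{(p,a,b)∈Λ∖(Δ∪Γ)} p·n^a·b^n, and let D be the maximum (0 if Δ∪Γ = ∅) of the 1-monotonicity thresholds of (j_{(p,a,b)}, i_{(p,a,b)}) and (b,a) over (p,a,b) ∈ Δ, together with the 1-monotonicity thresholds of (b,a) and (j_{(p,a,b)}, i_{(p,a,b)}) over (p,a,b) ∈ Γ. Then for every e ∈ ℤ^d satisfying ψ and every natural number n ≥ D: the value of ⌈npe⌉_ψ^{Δ,Γ} at (e, n) is greater than or equal to the value of npe at (e, n). -/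
open scoped Classical

noncomputable section

namespace Koat

/-! Replacing `n^a b^n` by a lex-larger `n^i j^n` can only raise a summand whose coefficient is
positive once `n` is past the monotonicity threshold, and replacing it by a lex-smaller one can
only raise a summand whose coefficient is non-positive; so the inequality holds summand by
summand. -/

open Filter Topology in
lemma eventually_lt_pow_mul_pow_of_lexGt (k : ℕ) {b₁ a₁ b₂ a₂ : ℕ} (hb₁ : 1 ≤ b₁)
    (h : lexGt b₁ a₁ b₂ a₂) :
    ∀ᶠ n : ℕ in atTop, k * (n ^ a₂ * b₂ ^ n) < n ^ a₁ * b₁ ^ n := by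
  rcases h with hb | ⟨rfl, ha⟩
  · have hb₁R : (0 : ℝ) < b₁ := by exact_mod_cast hb₁
    have hratio : Tendsto (fun n : ℕ => (k : ℝ) * ((n : ℝ) ^ a₂ * ((b₂ : ℝ) / b₁) ^ n))
        atTop (𝓝 0) := by
      simpa using (tendsto_pow_const_mul_const_pow_of_lt_one a₂ (by positivity)
        ((div_lt_one hb₁R).2 (by exact_mod_cast hb))).const_mul (k : ℝ)
    filter_upwards [hratio.eventually_lt_const one_pos, eventually_ge_atTop 1] with n hlt hn
    have hR : (k : ℝ) * ((n : ℝ) ^ a₂ * (b₂ : ℝ) ^ n) < (n : ℝ) ^ a₁ * (b₁ : ℝ) ^ n :=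
      calc (k : ℝ) * ((n : ℝ) ^ a₂ * (b₂ : ℝ) ^ n)
          = (k : ℝ) * ((n : ℝ) ^ a₂ * ((b₂ : ℝ) / b₁) ^ n) * (b₁ : ℝ) ^ n := by
            rw [div_pow, mul_assoc, mul_assoc, div_mul_cancel₀ _ (pow_pos hb₁R n).ne']
        _ < 1 * (b₁ : ℝ) ^ n := by gcongr
        _ ≤ (n : ℝ) ^ a₁ * (b₁ : ℝ) ^ n := by
            gcongr
            exact one_le_pow₀ (by exact_mod_cast hn)
    exact_mod_cast hR
  · filter_upwards [eventually_ge_atTop (k + 1)] with n hn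
    have hpos : 0 < n ^ a₂ * b₁ ^ n := Nat.mul_pos (Nat.pow_pos (by omega)) (Nat.pow_pos hb₁)
    calc k * (n ^ a₂ * b₁ ^ n) < n * (n ^ a₂ * b₁ ^ n) :=
          Nat.mul_lt_mul_of_pos_right (by omega) hpos
      _ = n ^ (a₂ + 1) * b₁ ^ n := by ring
      _ ≤ n ^ a₁ * b₁ ^ n := by gcongr <;> omega

lemma mthSet_nonempty (k : ℕ) {b₁ a₁ b₂ a₂ : ℕ} (hb₁ : 1 ≤ b₁) (h : lexGt b₁ a₁ b₂ a₂) :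
    (mthSet k b₁ a₁ b₂ a₂).Nonempty :=
  Filter.eventually_atTop.1 (eventually_lt_pow_mul_pow_of_lexGt k hb₁ h)

lemma lt_of_mth_le {k b₁ a₁ b₂ a₂ n : ℕ} (hb₁ : 1 ≤ b₁) (h : lexGt b₁ a₁ b₂ a₂)
    (hn : mth k b₁ a₁ b₂ a₂ ≤ n) : k * (n ^ a₂ * b₂ ^ n) < n ^ a₁ * b₁ ^ n :=
  Nat.sInf_mem (mthSet_nonempty k hb₁ h) n hn

lemma cast_pow_mul_pow_le_of_mth_le {R : Type*} [Semiring R] [PartialOrder R] [IsOrderedRing R]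
    {b₁ a₁ b₂ a₂ n : ℕ} (hb₁ : 1 ≤ b₁) (h : lexGt b₁ a₁ b₂ a₂)
    (hn : mth 1 b₁ a₁ b₂ a₂ ≤ n) :
    (n : R) ^ a₂ * (b₂ : R) ^ n ≤ (n : R) ^ a₁ * (b₁ : R) ^ n := by
  have hlt := lt_of_mth_le hb₁ h hn
  rw [one_mul] at hlt
  exact_mod_cast Nat.mono_cast hlt.le

theorem overapprox_npe_sound_general {d : ℕ} {ι : Type*} (ψ : (Fin d → ℤ) → Prop)
    (Λ Δ Γ : Finset ι) (p : ι → MvPolynomial (Fin d) ℚ) (av bv iv jv : ι → ℕ)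
    (hb : ∀ l ∈ Λ, 1 ≤ bv l)
    (hΔΛ : Δ ⊆ Λ) (hΓΛ : Γ ⊆ Λ)
    (hΔpos : ∀ e : Fin d → ℤ, ψ e → ∀ l ∈ Δ,
      0 < MvPolynomial.eval (fun i => (e i : ℚ)) (p l))
    (hΓnonpos : ∀ e : Fin d → ℤ, ψ e → ∀ l ∈ Γ,
      MvPolynomial.eval (fun i => (e i : ℚ)) (p l) ≤ 0)
    (hΔlex : ∀ l ∈ Δ, lexGt (jv l) (iv l) (bv l) (av l))
    (hΓlex : ∀ l ∈ Γ, lexGt (bv l) (av l) (jv l) (iv l))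
    (e : Fin d → ℤ) (hψ : ψ e) (n : ℕ)
    (hn : max (Δ.sup fun l => mth 1 (jv l) (iv l) (bv l) (av l))
            (Γ.sup fun l => mth 1 (bv l) (av l) (jv l) (iv l)) ≤ n) :
    (∑ l ∈ Λ, MvPolynomial.eval (fun i => (e i : ℚ)) (p l) * (n : ℚ) ^ av l * (bv l : ℚ) ^ n)
      ≤ (∑ l ∈ Δ ∪ Γ,
            MvPolynomial.eval (fun i => (e i : ℚ)) (p l) * (n : ℚ) ^ iv l * (jv l : ℚ) ^ n)
          + ∑ l ∈ Λ \ (Δ ∪ Γ),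
              MvPolynomial.eval (fun i => (e i : ℚ)) (p l) * (n : ℚ) ^ av l * (bv l : ℚ) ^ n := by
  obtain ⟨hnΔ, hnΓ⟩ := max_le_iff.1 hn
  rw [← Finset.sum_sdiff (Finset.union_subset hΔΛ hΓΛ), add_comm]
  refine add_le_add_left (Finset.sum_le_sum fun l hl => ?_) _
  rw [mul_assoc, mul_assoc]
  rcases Finset.mem_union.1 hl with hlΔ | hlΓ
  · have hlex := hΔlex l hlΔ
    have hjv : 1 ≤ jv l := by
      have := hb l (hΔΛ hlΔ)
      rcases hlex with h | ⟨h, _⟩ <;> omega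
    exact mul_le_mul_of_nonneg_left
      (cast_pow_mul_pow_le_of_mth_le hjv hlex (Finset.sup_le_iff.1 hnΔ l hlΔ))
      (hΔpos e hψ l hlΔ).le
  · exact mul_le_mul_of_nonpos_left
      (cast_pow_mul_pow_le_of_mth_le (hb l (hΓΛ hlΓ)) (hΓlex l hlΓ)
        (Finset.sup_le_iff.1 hnΓ l hlΓ))
      (hΓnonpos e hψ l hlΓ)

/-- soundness of the over-approximation `⌈npe⌉_ψ^{Δ,Γ}` of a normalized
poly-exponential expression: for all `e ⊨ ψ` and all `n ≥ D`, the value of the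
over-approximation at `(e,n)` is at least the value of `npe` at `(e,n)`. -/
theorem overapprox_npe_sound {d : ℕ} {ι : Type*} (ψ : (Fin d → ℤ) → Prop)
    (Λ Δ Γ : Finset ι) (p : ι → MvPolynomial (Fin d) ℚ) (av bv iv jv : ι → ℕ)
    (hmono : ∀ l ∈ Λ, ∃ (c : ℚ) (m : Fin d →₀ ℕ), p l = MvPolynomial.monomial m c)
    (hb : ∀ l ∈ Λ, 1 ≤ bv l)
    (hΔΛ : Δ ⊆ Λ) (hΓΛ : Γ ⊆ Λ) (hdisj : Disjoint Δ Γ)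
    (hΔpos : ∀ e : Fin d → ℤ, ψ e → ∀ l ∈ Δ,
      0 < MvPolynomial.eval (fun i => (e i : ℚ)) (p l))
    (hΓnonpos : ∀ e : Fin d → ℤ, ψ e → ∀ l ∈ Γ,
      MvPolynomial.eval (fun i => (e i : ℚ)) (p l) ≤ 0)
    (hΔlex : ∀ l ∈ Δ, lexGt (jv l) (iv l) (bv l) (av l))
    (hΓlex : ∀ l ∈ Γ, lexGt (bv l) (av l) (jv l) (iv l))
    (e : Fin d → ℤ) (hψ : ψ e) (n : ℕ)
    (hn : max (Δ.sup fun l => mth 1 (jv l) (iv l) (bv l) (av l))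
            (Γ.sup fun l => mth 1 (bv l) (av l) (jv l) (iv l)) ≤ n) :
    (∑ l ∈ Λ, MvPolynomial.eval (fun i => (e i : ℚ)) (p l) * (n : ℚ) ^ av l * (bv l : ℚ) ^ n)
      ≤ (∑ l ∈ Δ ∪ Γ,
            MvPolynomial.eval (fun i => (e i : ℚ)) (p l) * (n : ℚ) ^ iv l * (jv l : ℚ) ^ n)
          + ∑ l ∈ Λ \ (Δ ∪ Γ),
              MvPolynomial.eval (fun i => (e i : ℚ)) (p l) * (n : ℚ) ^ av l * (bv l : ℚ) ^ n :=
  overapprox_npe_sound_general ψ Λ Δ Γ p av bv iv jv hb hΔΛ hΓΛ hΔpos hΓnonpos hΔlex hΓlex e hψ n hn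

end Koat
end
end

section
/- Let npe = Σ_{j=1}^{ℓ} p_j·n^{a_j}·b_j^n with p_j ∈ ℤ[x1,...,xd], p_j ≠ 0, b_j ≥ 1, and (b_ℓ,a_ℓ) >lex ... >lex (b_1,a_1). Let C = max{1, N_2, M_2, ..., N_ℓ, M_ℓ} (C = 1 if ℓ = 1), with N_j, M_j as defined in the context. Fix e ∈ ℤ^d and suppose that the value of npe at (e,n) is ≤ 0 for all sufficiently large n ∈ ℕ. Then the value of npe at (e,n) is ≤ 0 for all natural numbers n ≥ max{C, 2·|σ_e|(⊔{p_1,...,p_{ℓ−1}})}, where σ_e is the assignment x_i ↦ e_i and |σ_e| the assignment x_i ↦ |e_i|. -/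
open scoped Classical

noncomputable section

namespace Koat

/-! ### Auxiliary lemmas for Statement 9 -/

lemma mthSet_nonempty_s9 {k b1 a1 b2 a2 : ℕ} (hb2 : 1 ≤ b2) (hk : 1 ≤ k)
    (h : lexGt b1 a1 b2 a2) : (mthSet k b1 a1 b2 a2).Nonempty := by
  rcases h with hlt | ⟨hbeq, halt⟩
  · have hb1pos : (0:ℝ) < (b1 : ℝ) := by
      have : 1 ≤ b1 := by omega
      exact_mod_cast Nat.lt_of_lt_of_le Nat.zero_lt_one this
    have hr0 : (0:ℝ) ≤ (b2:ℝ)/b1 := by positivity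
    have hr1 : (b2:ℝ)/b1 < 1 := by
      rw [div_lt_one hb1pos]; exact_mod_cast hlt
    have htend := tendsto_pow_const_mul_const_pow_of_lt_one a2 hr0 hr1
    have hkpos : (0:ℝ) < (k:ℝ) := by exact_mod_cast hk
    have hklt : (0:ℝ) < 1/(k:ℝ) := by positivity
    have hev := htend.eventually (gt_mem_nhds hklt)
    rw [Filter.eventually_atTop] at hev
    obtain ⟨n0, hn0⟩ := hev
    refine ⟨max n0 1, fun n hn => ?_⟩
    have hn1 : 1 ≤ n := le_trans (le_max_right _ _) hn
    have h1 : (n:ℝ)^a2 * ((b2:ℝ)/b1)^n < 1/k := hn0 n (le_trans (le_max_left _ _) hn)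
    have hb1n : (0:ℝ) < (b1:ℝ)^n := by positivity
    have h3 : (k:ℝ) * ((n:ℝ)^a2 * ((b2:ℝ)/b1)^n) < 1 := by
      calc (k:ℝ) * ((n:ℝ)^a2 * ((b2:ℝ)/b1)^n) < (k:ℝ) * (1/k) :=
            mul_lt_mul_of_pos_left h1 hkpos
        _ = 1 := by field_simp
    rw [div_pow] at h3
    have h2 : (k:ℝ) * ((n:ℝ)^a2 * (b2:ℝ)^n) < (b1:ℝ)^n := by
      calc (k:ℝ) * ((n:ℝ)^a2 * (b2:ℝ)^n)
          = ((k:ℝ) * ((n:ℝ)^a2 * ((b2:ℝ)^n/(b1:ℝ)^n))) * (b1:ℝ)^n := by field_simp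
        _ < 1 * (b1:ℝ)^n := mul_lt_mul_of_pos_right h3 hb1n
        _ = _ := one_mul _
    have hn1R : (1:ℝ) ≤ (n:ℝ)^a1 := one_le_pow₀ (by exact_mod_cast hn1)
    have h5 : (k:ℝ) * ((n:ℝ)^a2 * (b2:ℝ)^n) < (n:ℝ)^a1 * (b1:ℝ)^n := by
      nlinarith
    exact_mod_cast h5
  · refine ⟨k + 1, fun n hn => ?_⟩
    have hn1 : 1 ≤ n := by omega
    have hpos : 0 < n ^ a2 * b2 ^ n :=
      Nat.mul_pos (pow_pos (by omega) _) (pow_pos (by omega) _)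
    calc k * (n ^ a2 * b2 ^ n) < n * (n ^ a2 * b2 ^ n) :=
          Nat.mul_lt_mul_of_lt_of_le (by omega) le_rfl hpos
      _ = n ^ (a2 + 1) * b2 ^ n := by ring
      _ ≤ n ^ a1 * b1 ^ n := by
          rw [hbeq]
          exact Nat.mul_le_mul_right _ (Nat.pow_le_pow_right (by omega) (by omega))

lemma mth_spec {k b1 a1 b2 a2 : ℕ} (hb2 : 1 ≤ b2) (hk : 1 ≤ k)
    (h : lexGt b1 a1 b2 a2) {n : ℕ} (hn : mth k b1 a1 b2 a2 ≤ n) :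
    k * (n ^ a2 * b2 ^ n) < n ^ a1 * b1 ^ n :=
  Nat.sInf_mem (mthSet_nonempty_s9 hb2 hk h) n hn

lemma lexGt_trans {b1 a1 b2 a2 b3 a3 : ℕ} (h1 : lexGt b1 a1 b2 a2)
    (h2 : lexGt b2 a2 b3 a3) : lexGt b1 a1 b3 a3 := by
  simp only [lexGt] at *; omega

lemma lexGt_of_chain {ℓ : ℕ} {a b : ℕ → ℕ}
    (hchain : ∀ j, 1 ≤ j → j < ℓ → lexGt (b (j + 1)) (a (j + 1)) (b j) (a j)) :
    ∀ i j, 1 ≤ i → i < j → j ≤ ℓ → lexGt (b j) (a j) (b i) (a i) := by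
  intro i j hi
  induction j with
  | zero => omega
  | succ m ih =>
    intro hij hj
    rcases Nat.eq_or_lt_of_le (Nat.lt_succ_iff.mp hij) with rfl | him
    · exact hchain i hi (by omega)
    · exact lexGt_trans (hchain m (by omega) (by omega)) (ih him (by omega))

lemma sum_lt_aux {ℓ : ℕ} {a b : ℕ → ℕ} (hℓ : 2 ≤ ℓ)
    (hb : ∀ j, 1 ≤ j → j ≤ ℓ → 1 ≤ b j)
    (hchain : ∀ j, 1 ≤ j → j < ℓ → lexGt (b (j + 1)) (a (j + 1)) (b j) (a j))
    {n : ℕ} (hn1 : 1 ≤ n) (hN : Ndef b a ℓ ≤ n) :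
    ∑ i ∈ Finset.Icc 1 (ℓ - 2), n ^ a i * b i ^ n < n ^ a (ℓ - 1) * b (ℓ - 1) ^ n := by
  rcases Nat.lt_or_ge ℓ 4 with h4 | h4
  · interval_cases ℓ
    · rw [show (2:ℕ) - 2 = 0 from rfl, Finset.Icc_eq_empty (by omega), Finset.sum_empty]
      exact Nat.mul_pos (pow_pos (by omega) _) (pow_pos (hb 1 le_rfl (by omega)) _)
    · rw [show (3:ℕ) - 2 = 1 from rfl, Finset.Icc_self, Finset.sum_singleton]
      have hN3 : mth 1 (b 2) (a 2) (b 1) (a 1) ≤ n := by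
        simpa [Ndef] using hN
      have := mth_spec (hb 1 le_rfl (by omega)) le_rfl
        (hchain 1 le_rfl (by omega)) hN3
      simpa using this
  · have hNd : Ndef b a ℓ =
        max ((Finset.Icc 1 (ℓ - 3)).sup fun i => mth 1 (b (ℓ - 2)) (a (ℓ - 2)) (b i) (a i))
          (mth (ℓ - 2) (b (ℓ - 1)) (a (ℓ - 1)) (b (ℓ - 2)) (a (ℓ - 2))) := by
      unfold Ndef; rw [if_neg (by omega), if_neg (by omega)]
    rw [hNd, max_le_iff] at hN
    have hterm : ∀ i ∈ Finset.Icc 1 (ℓ - 3),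
        n ^ a i * b i ^ n ≤ n ^ a (ℓ - 2) * b (ℓ - 2) ^ n := by
      intro i hi
      simp only [Finset.mem_Icc] at hi
      have hlex : lexGt (b (ℓ - 2)) (a (ℓ - 2)) (b i) (a i) :=
        lexGt_of_chain hchain i (ℓ - 2) hi.1 (by omega) (by omega)
      have hmle : mth 1 (b (ℓ - 2)) (a (ℓ - 2)) (b i) (a i) ≤ n :=
        le_trans (Finset.le_sup (f := fun i => mth 1 (b (ℓ - 2)) (a (ℓ - 2)) (b i) (a i))
          (Finset.mem_Icc.mpr hi)) hN.1
      have := mth_spec (hb i hi.1 (by omega)) le_rfl hlex hmle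
      simpa using this.le
    have hsum : ∑ i ∈ Finset.Icc 1 (ℓ - 3), n ^ a i * b i ^ n
        ≤ (ℓ - 3) * (n ^ a (ℓ - 2) * b (ℓ - 2) ^ n) := by
      calc ∑ i ∈ Finset.Icc 1 (ℓ - 3), n ^ a i * b i ^ n
          ≤ ∑ _i ∈ Finset.Icc 1 (ℓ - 3), n ^ a (ℓ - 2) * b (ℓ - 2) ^ n :=
            Finset.sum_le_sum hterm
        _ = (ℓ - 3) * (n ^ a (ℓ - 2) * b (ℓ - 2) ^ n) := by
            rw [Finset.sum_const, Nat.card_Icc, smul_eq_mul, Nat.add_sub_cancel]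
    have hfinal : (ℓ - 2) * (n ^ a (ℓ - 2) * b (ℓ - 2) ^ n)
        < n ^ a (ℓ - 1) * b (ℓ - 1) ^ n := by
      have hlex : lexGt (b (ℓ - 1)) (a (ℓ - 1)) (b (ℓ - 2)) (a (ℓ - 2)) := by
        have := hchain (ℓ - 2) (by omega) (by omega)
        rwa [show ℓ - 2 + 1 = ℓ - 1 from by omega] at this
      exact mth_spec (hb (ℓ - 2) (by omega) (by omega)) (by omega) hlex hN.2
    have hsplit : ∑ i ∈ Finset.Icc 1 (ℓ - 2), n ^ a i * b i ^ n
        = (∑ i ∈ Finset.Icc 1 (ℓ - 3), n ^ a i * b i ^ n)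
          + n ^ a (ℓ - 2) * b (ℓ - 2) ^ n := by
      rw [show ℓ - 2 = (ℓ - 3) + 1 from by omega,
        Finset.sum_Icc_succ_top (by omega) (fun i => n ^ a i * b i ^ n),
        show ℓ - 3 + 1 = ℓ - 2 from by omega]
    rw [hsplit]
    calc (∑ i ∈ Finset.Icc 1 (ℓ - 3), n ^ a i * b i ^ n)
          + n ^ a (ℓ - 2) * b (ℓ - 2) ^ n
        ≤ (ℓ - 3) * (n ^ a (ℓ - 2) * b (ℓ - 2) ^ n) + n ^ a (ℓ - 2) * b (ℓ - 2) ^ n :=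
          Nat.add_le_add_right hsum _
      _ = (ℓ - 3 + 1) * (n ^ a (ℓ - 2) * b (ℓ - 2) ^ n) := by ring
      _ = (ℓ - 2) * (n ^ a (ℓ - 2) * b (ℓ - 2) ^ n) := by rw [show ℓ - 3 + 1 = ℓ - 2 from by omega]
      _ < _ := hfinal

lemma key_nat {ℓ : ℕ} {a b : ℕ → ℕ} (hℓ : 2 ≤ ℓ)
    (hb : ∀ j, 1 ≤ j → j ≤ ℓ → 1 ≤ b j)
    (hchain : ∀ j, 1 ≤ j → j < ℓ → lexGt (b (j + 1)) (a (j + 1)) (b j) (a j))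
    {n : ℕ} (hn1 : 1 ≤ n) (hN : Ndef b a ℓ ≤ n) (hM : Mdef b a ℓ ≤ n) :
    ∑ i ∈ Finset.Icc 1 (ℓ - 1), n ^ (a i + 1) * b i ^ n ≤ 2 * (n ^ a ℓ * b ℓ ^ n) := by
  have hS := sum_lt_aux hℓ hb hchain hn1 hN
  have hlexl : lexGt (b ℓ) (a ℓ) (b (ℓ - 1)) (a (ℓ - 1)) := by
    have := hchain (ℓ - 1) (by omega) (by omega)
    rwa [show ℓ - 1 + 1 = ℓ from by omega] at this
  have hstep : n ^ (a (ℓ - 1) + 1) * b (ℓ - 1) ^ n ≤ n ^ a ℓ * b ℓ ^ n := by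
    by_cases hbe : b ℓ = b (ℓ - 1)
    · have ha : a (ℓ - 1) + 1 ≤ a ℓ := by
        rcases hlexl with h | ⟨e, h⟩ <;> omega
      rw [hbe]
      exact Nat.mul_le_mul_right _ (Nat.pow_le_pow_right (by omega) ha)
    · have hMd : Mdef b a ℓ = mth 1 (b ℓ) (a ℓ) (b (ℓ - 1)) (a (ℓ - 1) + 1) := by
        unfold Mdef; rw [if_neg hbe]
      have hblt : b (ℓ - 1) < b ℓ := by
        rcases hlexl with h | ⟨e, h⟩
        · exact h
        · omega
      have := mth_spec (hb (ℓ - 1) (by omega) (by omega)) le_rfl (Or.inl hblt)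
        (le_trans hMd.ge hM)
      simpa using this.le
  have hsplit : ∑ i ∈ Finset.Icc 1 (ℓ - 1), n ^ (a i + 1) * b i ^ n
      = (∑ i ∈ Finset.Icc 1 (ℓ - 2), n ^ (a i + 1) * b i ^ n)
        + n ^ (a (ℓ - 1) + 1) * b (ℓ - 1) ^ n := by
    rw [show ℓ - 1 = (ℓ - 2) + 1 from by omega,
      Finset.sum_Icc_succ_top (by omega) (fun i => n ^ (a i + 1) * b i ^ n),
      show ℓ - 2 + 1 = ℓ - 1 from by omega]
  have hmul : ∑ i ∈ Finset.Icc 1 (ℓ - 2), n ^ (a i + 1) * b i ^ n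
      = n * ∑ i ∈ Finset.Icc 1 (ℓ - 2), n ^ a i * b i ^ n := by
    rw [Finset.mul_sum]
    exact Finset.sum_congr rfl fun i _ => by ring
  rw [hsplit, hmul]
  calc n * (∑ i ∈ Finset.Icc 1 (ℓ - 2), n ^ a i * b i ^ n)
        + n ^ (a (ℓ - 1) + 1) * b (ℓ - 1) ^ n
      ≤ n * (n ^ a (ℓ - 1) * b (ℓ - 1) ^ n) + n ^ (a (ℓ - 1) + 1) * b (ℓ - 1) ^ n :=
        Nat.add_le_add_right (Nat.mul_le_mul_left _ hS.le) _
    _ = 2 * (n ^ (a (ℓ - 1) + 1) * b (ℓ - 1) ^ n) := by ring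
    _ ≤ 2 * (n ^ a ℓ * b ℓ ^ n) := Nat.mul_le_mul_left _ hstep

lemma eval_sqcupF_eq {d : ℕ} {ι : Type*} (s : Finset ι) (p : ι → MvPolynomial (Fin d) ℤ)
    (σ : Fin d → ℤ) :
    MvPolynomial.eval σ (sqcupF s p) =
      ∑ m ∈ s.biUnion (fun j => (p j).support),
        ((s.sup fun j => ((p j).coeff m).natAbs : ℕ) : ℤ) * ∏ i ∈ m.support, σ i ^ m i := by
  unfold sqcupF
  rw [map_sum]
  refine Finset.sum_congr rfl fun m _ => ?_
  rw [MvPolynomial.eval_monomial]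
  rfl

lemma abs_eval_le {d : ℕ} {ι : Type*} {s : Finset ι} {p : ι → MvPolynomial (Fin d) ℤ}
    {j : ι} (hj : j ∈ s) (σ : Fin d → ℤ) :
    |MvPolynomial.eval σ (p j)| ≤ MvPolynomial.eval (fun i => |σ i|) (sqcupF s p) := by
  classical
  rw [eval_sqcupF_eq, MvPolynomial.eval_eq]
  calc |∑ m ∈ (p j).support, (p j).coeff m * ∏ i ∈ m.support, σ i ^ m i|
      ≤ ∑ m ∈ (p j).support, |(p j).coeff m * ∏ i ∈ m.support, σ i ^ m i| :=
        Finset.abs_sum_le_sum_abs _ _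
    _ = ∑ m ∈ (p j).support, |(p j).coeff m| * ∏ i ∈ m.support, |σ i| ^ m i := by
        refine Finset.sum_congr rfl fun m _ => ?_
        rw [abs_mul, Finset.abs_prod]
        congr 1
        exact Finset.prod_congr rfl fun i _ => abs_pow _ _
    _ ≤ ∑ m ∈ (p j).support,
          ((s.sup fun j' => ((p j').coeff m).natAbs : ℕ) : ℤ) * ∏ i ∈ m.support, |σ i| ^ m i := by
        refine Finset.sum_le_sum fun m _ => ?_
        have h1 : |(p j).coeff m| ≤ ((s.sup fun j' => ((p j').coeff m).natAbs : ℕ) : ℤ) := by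
          rw [Int.abs_eq_natAbs]
          exact_mod_cast Finset.le_sup (f := fun j' => ((p j').coeff m).natAbs) hj
        refine mul_le_mul_of_nonneg_right h1 ?_
        exact Finset.prod_nonneg fun i _ => pow_nonneg (abs_nonneg _) _
    _ ≤ ∑ m ∈ s.biUnion (fun j => (p j).support),
          ((s.sup fun j' => ((p j').coeff m).natAbs : ℕ) : ℤ) * ∏ i ∈ m.support, |σ i| ^ m i := by
        refine Finset.sum_le_sum_of_subset_of_nonneg
          (fun m hm => Finset.mem_biUnion.mpr ⟨j, hj, hm⟩) fun m _ _ => ?_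
        exact mul_nonneg (Int.natCast_nonneg _)
          (Finset.prod_nonneg fun i _ => pow_nonneg (abs_nonneg _) _)

lemma eval_sqcupF_mono {d : ℕ} {ι : Type*} {s t : Finset ι} (hst : s ⊆ t)
    (p : ι → MvPolynomial (Fin d) ℤ) (σ : Fin d → ℤ) :
    MvPolynomial.eval (fun i => |σ i|) (sqcupF s p)
      ≤ MvPolynomial.eval (fun i => |σ i|) (sqcupF t p) := by
  classical
  rw [eval_sqcupF_eq, eval_sqcupF_eq]
  calc ∑ m ∈ s.biUnion (fun j => (p j).support),
        ((s.sup fun j => ((p j).coeff m).natAbs : ℕ) : ℤ) * ∏ i ∈ m.support, |σ i| ^ m i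
      ≤ ∑ m ∈ s.biUnion (fun j => (p j).support),
        ((t.sup fun j => ((p j).coeff m).natAbs : ℕ) : ℤ) * ∏ i ∈ m.support, |σ i| ^ m i := by
        refine Finset.sum_le_sum fun m _ => ?_
        refine mul_le_mul_of_nonneg_right ?_
          (Finset.prod_nonneg fun i _ => pow_nonneg (abs_nonneg _) _)
        exact_mod_cast Finset.sup_mono hst
    _ ≤ _ := by
        refine Finset.sum_le_sum_of_subset_of_nonneg
          (Finset.biUnion_subset_biUnion_of_subset_left _ hst) fun m _ _ => ?_
        exact mul_nonneg (Int.natCast_nonneg _)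
          (Finset.prod_nonneg fun i _ => pow_nonneg (abs_nonneg _) _)

lemma eval_sqcupF_nonneg {d : ℕ} {ι : Type*} (s : Finset ι) (p : ι → MvPolynomial (Fin d) ℤ)
    (σ : Fin d → ℤ) :
    0 ≤ MvPolynomial.eval (fun i => |σ i|) (sqcupF s p) := by
  rw [eval_sqcupF_eq]
  exact Finset.sum_nonneg fun m _ => mul_nonneg (Int.natCast_nonneg _)
    (Finset.prod_nonneg fun i _ => pow_nonneg (abs_nonneg _) _)

lemma main_aux {d : ℕ} : ∀ ℓ : ℕ, 1 ≤ ℓ →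
    ∀ (p : ℕ → MvPolynomial (Fin d) ℤ) (a b : ℕ → ℕ),
    (∀ j, 1 ≤ j → j ≤ ℓ → 1 ≤ b j) →
    (∀ j, 1 ≤ j → j < ℓ → lexGt (b (j + 1)) (a (j + 1)) (b j) (a j)) →
    ∀ (e : Fin d → ℤ),
    (∃ n₁ : ℕ, ∀ n ≥ n₁,
      (∑ j ∈ Finset.Icc 1 ℓ,
        MvPolynomial.eval e (p j) * (n : ℤ) ^ a j * (b j : ℤ) ^ n) ≤ 0) →
    ∀ n : ℕ,
    max 1 ((Finset.Icc 2 ℓ).sup fun j => max (Ndef b a j) (Mdef b a j)) ≤ n →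
    2 * MvPolynomial.eval (fun i => |e i|) (sqcupF (Finset.Icc 1 (ℓ - 1)) p) ≤ (n : ℤ) →
    (∑ j ∈ Finset.Icc 1 ℓ,
      MvPolynomial.eval e (p j) * (n : ℤ) ^ a j * (b j : ℤ) ^ n) ≤ 0 := by
  intro ℓ
  induction ℓ using Nat.strong_induction_on with
  | _ ℓ IH =>
  intro hℓ p a b hb hchain e hev n hC hP
  have hn1 : 1 ≤ n := le_trans (le_max_left _ _) hC
  by_cases hl1 : ℓ = 1
  · subst hl1
    obtain ⟨n₁, h1⟩ := hev
    simp only [Finset.Icc_self, Finset.sum_singleton] at h1 ⊢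
    have hq : MvPolynomial.eval e (p 1) ≤ 0 := by
      have h2 := h1 (max n₁ 1) (le_max_left _ _)
      set m := max n₁ 1 with hm
      have hm1 : 1 ≤ m := le_max_right _ _
      have hpos : (0:ℤ) < (m:ℤ) ^ a 1 * (b 1 : ℤ) ^ m := by
        have hb1 : (0:ℤ) < (b 1 : ℤ) := by exact_mod_cast hb 1 le_rfl le_rfl
        have hmp : (0:ℤ) < (m:ℤ) := by exact_mod_cast hm1
        positivity
      by_contra hcon
      push_neg at hcon
      nlinarith
    have hXpos : (0:ℤ) ≤ (n:ℤ) ^ a 1 * (b 1 : ℤ) ^ n := by positivity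
    rw [mul_assoc]
    exact mul_nonpos_of_nonpos_of_nonneg hq hXpos
  -- ℓ ≥ 2
  obtain ⟨m, rfl⟩ : ∃ m, ℓ = m + 1 := ⟨ℓ - 1, by omega⟩
  have hm1 : 1 ≤ m := by omega
  simp only [Nat.add_sub_cancel] at hP
  -- the key cast inequality
  have hkeyZ : ∀ N : ℕ, 1 ≤ N → Ndef b a (m + 1) ≤ N → Mdef b a (m + 1) ≤ N →
      (N:ℤ) * (∑ j ∈ Finset.Icc 1 m, (N:ℤ) ^ a j * (b j : ℤ) ^ N)
        ≤ 2 * ((N:ℤ) ^ a (m + 1) * (b (m + 1) : ℤ) ^ N) := by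
    intro N h1 h2 h3
    have hnat := key_nat (show 2 ≤ m + 1 by omega) hb hchain h1 h2 h3
    simp only [Nat.add_sub_cancel] at hnat
    have hcast : (↑(∑ i ∈ Finset.Icc 1 m, N ^ (a i + 1) * b i ^ N) : ℤ)
        ≤ (↑(2 * (N ^ a (m + 1) * b (m + 1) ^ N)) : ℤ) := by exact_mod_cast hnat
    push_cast at hcast
    calc (N:ℤ) * (∑ j ∈ Finset.Icc 1 m, (N:ℤ) ^ a j * (b j : ℤ) ^ N)
        = ∑ i ∈ Finset.Icc 1 m, (N:ℤ) ^ (a i + 1) * (b i : ℤ) ^ N := by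
          rw [Finset.mul_sum]
          exact Finset.sum_congr rfl fun i _ => by ring
      _ ≤ _ := hcast
  obtain ⟨n₁, h1⟩ := hev
  have hCsup : ∀ N : ℕ,
      max 1 ((Finset.Icc 2 (m + 1)).sup fun j => max (Ndef b a j) (Mdef b a j)) ≤ N →
      1 ≤ N ∧ Ndef b a (m + 1) ≤ N ∧ Mdef b a (m + 1) ≤ N := by
    intro N hN
    rw [max_le_iff] at hN
    have hmem : m + 1 ∈ Finset.Icc 2 (m + 1) := Finset.mem_Icc.mpr ⟨by omega, le_rfl⟩
    have := le_trans (Finset.le_sup (f := fun j => max (Ndef b a j) (Mdef b a j)) hmem) hN.2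
    rw [max_le_iff] at this
    exact ⟨hN.1, this.1, this.2⟩
  -- the leading coefficient is nonpositive
  have hqℓ : MvPolynomial.eval e (p (m + 1)) ≤ 0 := by
    by_contra hpos
    push_neg at hpos
    set Q : ℕ := (Finset.Icc 1 m).sup (fun j => (MvPolynomial.eval e (p j)).natAbs) with hQ
    set N : ℕ := max (max n₁
        (max 1 ((Finset.Icc 2 (m + 1)).sup fun j => max (Ndef b a j) (Mdef b a j))))
      (2 * Q + 2) with hNdef
    have hNspec := hCsup N (le_trans (le_max_right _ _) (le_max_left _ _))
    have hN1 : 1 ≤ N := hNspec.1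
    have hk := hkeyZ N hN1 hNspec.2.1 hNspec.2.2
    have h2 := h1 N (le_trans (le_max_left _ _) (le_max_left _ _))
    rw [Finset.sum_Icc_succ_top (by omega)] at h2
    have hXnn : ∀ j, (0:ℤ) ≤ (N:ℤ) ^ a j * (b j : ℤ) ^ N := fun j => by positivity
    have hSnn : (0:ℤ) ≤ ∑ j ∈ Finset.Icc 1 m, (N:ℤ) ^ a j * (b j : ℤ) ^ N :=
      Finset.sum_nonneg fun j _ => hXnn j
    have hS1 : (1:ℤ) ≤ ∑ j ∈ Finset.Icc 1 m, (N:ℤ) ^ a j * (b j : ℤ) ^ N := by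
      have h1mem : (1:ℕ) ∈ Finset.Icc 1 m := Finset.mem_Icc.mpr ⟨le_rfl, hm1⟩
      have hX1 : (1:ℤ) ≤ (N:ℤ) ^ a 1 * (b 1 : ℤ) ^ N := by
        have hb1 : (1:ℤ) ≤ (b 1 : ℤ) := by exact_mod_cast hb 1 le_rfl (by omega)
        have hN1' : (1:ℤ) ≤ (N:ℤ) := by exact_mod_cast hN1
        exact one_le_mul_of_one_le_of_one_le (one_le_pow₀ hN1') (one_le_pow₀ hb1)
      exact le_trans hX1 (Finset.single_le_sum (fun j _ => hXnn j) h1mem)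
    have hlow : -(Q:ℤ) * (∑ j ∈ Finset.Icc 1 m, (N:ℤ) ^ a j * (b j : ℤ) ^ N)
        ≤ ∑ j ∈ Finset.Icc 1 m,
            MvPolynomial.eval e (p j) * (N:ℤ) ^ a j * (b j : ℤ) ^ N := by
      rw [Finset.mul_sum]
      refine Finset.sum_le_sum fun j hj => ?_
      rw [mul_assoc]
      refine mul_le_mul_of_nonneg_right ?_ (hXnn j)
      have : (MvPolynomial.eval e (p j)).natAbs ≤ Q :=
        Finset.le_sup (f := fun j => (MvPolynomial.eval e (p j)).natAbs) hj
      have habs : |MvPolynomial.eval e (p j)| ≤ (Q:ℤ) := by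
        rw [Int.abs_eq_natAbs]; exact_mod_cast this
      linarith [neg_abs_le (MvPolynomial.eval e (p j))]
    have hQN : 2 * Q + 2 ≤ N := le_max_right _ _
    have hQNZ : 2 * (Q:ℤ) + 2 ≤ (N:ℤ) := by exact_mod_cast hQN
    have hprod : (0:ℤ) ≤ ((N:ℤ) - 2 * Q - 2)
        * (∑ j ∈ Finset.Icc 1 m, (N:ℤ) ^ a j * (b j : ℤ) ^ N) :=
      mul_nonneg (by linarith) hSnn
    have hQS : (Q:ℤ) * (∑ j ∈ Finset.Icc 1 m, (N:ℤ) ^ a j * (b j : ℤ) ^ N)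
        < (N:ℤ) ^ a (m + 1) * (b (m + 1) : ℤ) ^ N := by
      nlinarith
    have hq1 : (1:ℤ) ≤ MvPolynomial.eval e (p (m + 1)) := hpos
    have hqX := mul_le_mul_of_nonneg_right hq1 (hXnn (m + 1))
    rw [one_mul] at hqX
    nlinarith [h2, hlow, hQS, hqX]
  rcases eq_or_lt_of_le hqℓ with hq0 | hqneg
  · -- leading coefficient zero: use the induction hypothesis
    have hdrop : ∀ N : ℕ,
        (∑ j ∈ Finset.Icc 1 (m + 1),
          MvPolynomial.eval e (p j) * (N : ℤ) ^ a j * (b j : ℤ) ^ N)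
        = ∑ j ∈ Finset.Icc 1 m,
          MvPolynomial.eval e (p j) * (N : ℤ) ^ a j * (b j : ℤ) ^ N := by
      intro N
      rw [Finset.sum_Icc_succ_top (by omega), hq0, zero_mul, zero_mul, add_zero]
    rw [hdrop]
    refine IH m (by omega) hm1 p a b (fun j h1 h2 => hb j h1 (by omega))
      (fun j h1 h2 => hchain j h1 (by omega)) e
      ⟨n₁, fun N hN => by rw [← hdrop]; exact h1 N hN⟩ n ?_ ?_
    · refine le_trans (max_le_max le_rfl (Finset.sup_mono ?_)) hC
      exact Finset.Icc_subset_Icc_right (by omega)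
    · refine le_trans (mul_le_mul_of_nonneg_left ?_ (by norm_num)) hP
      exact eval_sqcupF_mono (Finset.Icc_subset_Icc_right (by omega)) p e
  · -- leading coefficient negative
    have hNspec := hCsup n hC
    have hk := hkeyZ n hn1 hNspec.2.1 hNspec.2.2
    have hXnn : ∀ j, (0:ℤ) ≤ (n:ℤ) ^ a j * (b j : ℤ) ^ n := fun j => by positivity
    have hSnn : (0:ℤ) ≤ ∑ j ∈ Finset.Icc 1 m, (n:ℤ) ^ a j * (b j : ℤ) ^ n :=
      Finset.sum_nonneg fun j _ => hXnn j
    have hup : ∑ j ∈ Finset.Icc 1 m,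
          MvPolynomial.eval e (p j) * (n:ℤ) ^ a j * (b j : ℤ) ^ n
        ≤ MvPolynomial.eval (fun i => |e i|) (sqcupF (Finset.Icc 1 m) p)
          * (∑ j ∈ Finset.Icc 1 m, (n:ℤ) ^ a j * (b j : ℤ) ^ n) := by
      rw [Finset.mul_sum]
      refine Finset.sum_le_sum fun j hj => ?_
      rw [mul_assoc]
      refine mul_le_mul_of_nonneg_right ?_ (hXnn j)
      exact le_trans (le_abs_self _) (abs_eval_le hj e)
    have hprod : (0:ℤ) ≤ ((n:ℤ)
          - 2 * MvPolynomial.eval (fun i => |e i|) (sqcupF (Finset.Icc 1 m) p))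
        * (∑ j ∈ Finset.Icc 1 m, (n:ℤ) ^ a j * (b j : ℤ) ^ n) :=
      mul_nonneg (by linarith) hSnn
    have hPS : MvPolynomial.eval (fun i => |e i|) (sqcupF (Finset.Icc 1 m) p)
          * (∑ j ∈ Finset.Icc 1 m, (n:ℤ) ^ a j * (b j : ℤ) ^ n)
        ≤ (n:ℤ) ^ a (m + 1) * (b (m + 1) : ℤ) ^ n := by
      nlinarith
    have hqm : MvPolynomial.eval e (p (m + 1)) ≤ -1 := by omega
    have hqX := mul_le_mul_of_nonneg_right hqm (hXnn (m + 1))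
    rw [neg_one_mul] at hqX
    rw [Finset.sum_Icc_succ_top (by omega)]
    nlinarith [hup, hPS, hqX]

/-- if the value of `npe = Σ_{j=1}^{ℓ} p_j·n^{a_j}·b_j^n` at `e` is
non-positive for all sufficiently large `n`, then it is non-positive for all
`n ≥ max {C, 2·|σ_e|(⊔{p₁,…,p_{ℓ-1}})}`. -/
theorem npe_nonpos_from_threshold {d : ℕ} (ℓ : ℕ) (hℓ : 1 ≤ ℓ)
    (p : ℕ → MvPolynomial (Fin d) ℤ) (a b : ℕ → ℕ)
    (hp : ∀ j, 1 ≤ j → j ≤ ℓ → p j ≠ 0)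
    (hb : ∀ j, 1 ≤ j → j ≤ ℓ → 1 ≤ b j)
    (hchain : ∀ j, 1 ≤ j → j < ℓ → lexGt (b (j + 1)) (a (j + 1)) (b j) (a j))
    (e : Fin d → ℤ)
    (hev : ∃ n₁ : ℕ, ∀ n ≥ n₁,
      (∑ j ∈ Finset.Icc 1 ℓ,
        MvPolynomial.eval e (p j) * (n : ℤ) ^ a j * (b j : ℤ) ^ n) ≤ 0)
    (n : ℕ)
    (hC : max 1 ((Finset.Icc 2 ℓ).sup fun j => max (Ndef b a j) (Mdef b a j)) ≤ n)
    (hP : 2 * MvPolynomial.eval (fun i => |e i|) (sqcupF (Finset.Icc 1 (ℓ - 1)) p) ≤ (n : ℤ)) :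
    (∑ j ∈ Finset.Icc 1 ℓ,
      MvPolynomial.eval e (p j) * (n : ℤ) ^ a j * (b j : ℤ) ^ n) ≤ 0 :=
  main_aux ℓ hℓ p a b hb hchain e hev n hC hP

end Koat
end
end

section
/- Let L = (ψ, φ, η) be a terminating tnn-loop over ℤ^d and let (cl_{x1},...,cl_{xd}) be a normalized closed form for η with start value n0. For every atom α = (s1 < s2) occurring in φ, let npe_α be the normalized poly-exponential expression obtained by multiplying (s2 − s1)[x/cl] by the least common multiple of all denominators occurring in it, and let ⌈npe_α⌉ be an eventually non-positive over-approximation of npe_α with respect to ψ' = ψ ∧ φ (with associated constant D_α as in the context). Write ⌈npe_α⌉ = Σ_{j=1}^{ℓ} p_j·n^{a_j}·b_j^n with p_j ∈ ℤ[x1,...,xd], p_j ≠ 0, and (b_ℓ,a_ℓ) >lex ... >lex (b_1,a_1); set C_α = max{1, N_2, M_2, ..., N_ℓ, M_ℓ} and Pol_α = {p_1,...,p_{ℓ−1}}. Let Pol be the union of the Pol_α, C the maximum of the C_α, and D the maximum of the D_α over all atoms α of φ, and define sth⊔ = 2·⊔Pol + max{n0, C, D}. Then for every e ∈ ℤ^d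 satisfying ψ ∧ φ: |σ_e|(sth⊔) ≥ sth_{(ψ,φ,η)}(e), the stabilization threshold of the loop at e. Consequently, RBglo(t0) = 1 and RBglo(t) = sth⊔ is a global runtime bound for the integer program L with initial transition t0 = (ℓ0, ψ, id, ℓ) and looping transition t = (ℓ, φ, η, ℓ). -/
open scoped Classical

noncomputable section

namespace Koat

lemma mthSet_one_nonempty {b a b' a' : ℕ} (hb : 1 ≤ b) (h : b < b') :
    (mthSet 1 b' a' b a).Nonempty := by
  have hb0 : (0:ℝ) < (b:ℝ) := by exact_mod_cast hb
  have hr : (1:ℝ) < (b':ℝ)/(b:ℝ) := by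
    rw [lt_div_iff₀ hb0, one_mul]; exact_mod_cast h
  have hlo := (isLittleO_pow_const_const_pow_of_one_lt (R := ℝ) a hr).def (by norm_num : (0:ℝ) < 1/2)
  rw [Filter.eventually_atTop] at hlo
  obtain ⟨n₀, hn₀⟩ := hlo
  refine ⟨max n₀ 1, fun n hn => ?_⟩
  have hn1 : 1 ≤ n := le_trans (le_max_right _ _) hn
  have h1 := hn₀ n (le_trans (le_max_left _ _) hn)
  simp only [norm_pow, Real.norm_natCast, Real.norm_eq_abs] at h1
  have hrpos : (0:ℝ) < ((b':ℝ)/(b:ℝ))^n := by positivity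
  have h2 : ((n:ℝ))^a < ((b':ℝ)/(b:ℝ))^n := by
    have habs : |((b':ℝ)/(b:ℝ))| = (b':ℝ)/(b:ℝ) := abs_of_pos (by positivity)
    rw [Nat.abs_cast, habs] at h1
    linarith
  have h3 : ((n:ℝ))^a * (b:ℝ)^n < (b':ℝ)^n := by
    have := mul_lt_mul_of_pos_right h2 (by positivity : (0:ℝ) < (b:ℝ)^n)
    rwa [div_pow, div_mul_cancel₀] at this
    positivity
  have h4 : ((n:ℝ))^a * (b:ℝ)^n < (n:ℝ)^a' * (b':ℝ)^n := by
    calc ((n:ℝ))^a * (b:ℝ)^n < (b':ℝ)^n := h3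
    _ ≤ (n:ℝ)^a' * (b':ℝ)^n := by
        nlinarith [one_le_pow₀ (by exact_mod_cast hn1 : (1:ℝ) ≤ (n:ℝ)) (n := a'),
          pow_pos (by exact_mod_cast h.trans_le' hb |>.trans_le' (by norm_num) : (0:ℝ) < (b':ℝ)) n]
  rw [one_mul]
  exact_mod_cast h4

lemma mth_one_spec {b a b' a' : ℕ} (hb : 1 ≤ b) (h : b < b') {n : ℕ}
    (hn : mth 1 b' a' b a ≤ n) : n ^ a * b ^ n < n ^ a' * b' ^ n := by
  have := Nat.sInf_mem (mthSet_one_nonempty (a := a) (a' := a') hb h) n hn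
  simpa using this

/-- key step: `n^(a r + 1) * b r ^ n ≤ n^(a (r+1)) * b (r+1)^n`. -/
lemma pow_step {b a : ℕ → ℕ} {r n : ℕ} (hb : 1 ≤ b r)
    (hlex : lexGt (b (r+1)) (a (r+1)) (b r) (a r))
    (hM : Mdef b a (r+1) ≤ n) (hn1 : 1 ≤ n) :
    n ^ (a r + 1) * b r ^ n ≤ n ^ (a (r+1)) * (b (r+1)) ^ n := by
  rcases hlex with hlt | ⟨heq, hlt⟩
  · have hM' : Mdef b a (r+1) = mth 1 (b (r+1)) (a (r+1)) (b r) (a r + 1) := by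
      unfold Mdef
      simp [Nat.add_sub_cancel, (Nat.ne_of_gt hlt)]
    rw [hM'] at hM
    exact (mth_one_spec hb hlt hM).le
  · rw [heq]
    have : a r + 1 ≤ a (r+1) := hlt
    exact Nat.mul_le_mul_right _ (Nat.pow_le_pow_right hn1 this)

/-- Domination: `K * Σ_{j=1}^r n^(a j) b j ^ n < n^(a (r+1)) * b (r+1) ^ n`. -/
lemma dom_lemma {b a : ℕ → ℕ} {K C : ℕ}
    (hC1 : 1 ≤ C) :
    ∀ r : ℕ, 1 ≤ r →
    (∀ j, 1 ≤ j → j ≤ r → 1 ≤ b j) →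
    (∀ j, 1 ≤ j → j ≤ r → lexGt (b (j+1)) (a (j+1)) (b j) (a j)) →
    (∀ j, 2 ≤ j → j ≤ r + 1 → Mdef b a j ≤ C) →
    ∀ n, 2 * K + C ≤ n →
      K * ∑ j ∈ Finset.Icc 1 r, n ^ (a j) * (b j) ^ n < n ^ (a (r+1)) * (b (r+1)) ^ n := by
  intro r
  induction r with
  | zero => omega
  | succ m ih =>
    intro _ hbj hchain hMj n hn
    have hn1 : 1 ≤ n := by omega
    have hKn : K + 1 ≤ n := by omega
    have hbm : 1 ≤ b (m+1) := hbj _ (by omega) le_rfl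
    have hstep : n ^ (a (m+1) + 1) * b (m+1) ^ n ≤ n ^ (a (m+2)) * (b (m+2)) ^ n :=
      pow_step hbm (hchain _ (by omega) le_rfl)
        (le_trans (hMj (m+2) (by omega) le_rfl) (by omega)) hn1
    have hpos : 0 < n ^ (a (m+1)) * b (m+1) ^ n := by positivity
    rcases Nat.eq_zero_or_pos m with hm | hm
    · subst hm
      simp only [Finset.Icc_self, Finset.sum_singleton]
      calc K * (n ^ (a 1) * b 1 ^ n) < (K + 1) * (n ^ (a 1) * b 1 ^ n) := by
            exact Nat.mul_lt_mul_of_lt_of_le (by omega) le_rfl hpos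
      _ ≤ n * (n ^ (a 1) * b 1 ^ n) := Nat.mul_le_mul_right _ hKn
      _ = n ^ (a 1 + 1) * b 1 ^ n := by ring
      _ ≤ n ^ (a 2) * b 2 ^ n := hstep
    · have hsum : ∑ j ∈ Finset.Icc 1 (m+1), n ^ (a j) * (b j) ^ n
          = (∑ j ∈ Finset.Icc 1 m, n ^ (a j) * (b j) ^ n) + n ^ (a (m+1)) * b (m+1) ^ n := by
        rw [← Finset.sum_Icc_succ_top (by omega : 1 ≤ m + 1)]
      have hih := ih hm (fun j h1 h2 => hbj j h1 (by omega))
        (fun j h1 h2 => hchain j h1 (by omega)) (fun j h1 h2 => hMj j h1 (by omega)) n hn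
      calc K * ∑ j ∈ Finset.Icc 1 (m+1), n ^ (a j) * (b j) ^ n
          = K * ∑ j ∈ Finset.Icc 1 m, n ^ (a j) * (b j) ^ n
            + K * (n ^ (a (m+1)) * b (m+1) ^ n) := by rw [hsum]; ring
        _ < n ^ (a (m+1)) * b (m+1) ^ n + K * (n ^ (a (m+1)) * b (m+1) ^ n) := by omega
        _ = (K + 1) * (n ^ (a (m+1)) * b (m+1) ^ n) := by ring
        _ ≤ n * (n ^ (a (m+1)) * b (m+1) ^ n) := Nat.mul_le_mul_right _ hKn
        _ = n ^ (a (m+1) + 1) * b (m+1) ^ n := by ring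
        _ ≤ n ^ (a (m+2)) * b (m+2) ^ n := hstep

/-- sign of the sum equals sign of the leading nonzero coefficient. -/
lemma sign_of_sum {ℓ : ℕ} {P : ℕ → ℤ} {a b : ℕ → ℕ} {K C : ℕ} {j' : ℕ}
    (hj1 : 1 ≤ j') (hjl : j' ≤ ℓ) (hPne : P j' ≠ 0)
    (hPz : ∀ j, j' < j → j ≤ ℓ → P j = 0)
    (hK : ∀ j, 1 ≤ j → j < ℓ → (P j).natAbs ≤ K)
    (hb : ∀ j, 1 ≤ j → j ≤ ℓ → 1 ≤ b j)
    (hchain : ∀ j, 1 ≤ j → j < ℓ → lexGt (b (j+1)) (a (j+1)) (b j) (a j))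
    (hC1 : 1 ≤ C) (hCM : ∀ j, 2 ≤ j → j ≤ ℓ → Mdef b a j ≤ C)
    {n : ℕ} (hn : 2 * K + C ≤ n) :
    (0 < ∑ j ∈ Finset.Icc 1 ℓ, P j * (n:ℤ) ^ (a j) * ((b j : ℤ)) ^ n ↔ 0 < P j') := by
  have hn1 : 1 ≤ n := by omega
  -- restrict sum to Icc 1 j'
  have hsub : Finset.Icc 1 j' ⊆ Finset.Icc 1 ℓ := Finset.Icc_subset_Icc le_rfl hjl
  have hsum : ∑ j ∈ Finset.Icc 1 ℓ, P j * (n:ℤ) ^ (a j) * ((b j : ℤ)) ^ n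
      = ∑ j ∈ Finset.Icc 1 j', P j * (n:ℤ) ^ (a j) * ((b j : ℤ)) ^ n := by
    rw [Finset.sum_subset hsub]
    intro x hx hx'
    simp only [Finset.mem_Icc] at hx hx'
    rw [hPz x (by omega) hx.2]
    ring
  rw [hsum]
  have hsplit : ∑ j ∈ Finset.Icc 1 j', P j * (n:ℤ) ^ (a j) * ((b j : ℤ)) ^ n
      = (∑ j ∈ Finset.Icc 1 (j'-1), P j * (n:ℤ) ^ (a j) * ((b j : ℤ)) ^ n)
        + P j' * (n:ℤ) ^ (a j') * ((b j' : ℤ)) ^ n := by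
    have : j' = (j' - 1) + 1 := by omega
    rw [this, Finset.sum_Icc_succ_top (by omega : 1 ≤ j' - 1 + 1), ← this]
  set T : ℤ := (n:ℤ) ^ (a j') * ((b j' : ℤ)) ^ n with hT
  have hTpos : 0 < T := by
    have := hb j' hj1 hjl
    positivity
  set R : ℤ := ∑ j ∈ Finset.Icc 1 (j'-1), P j * (n:ℤ) ^ (a j) * ((b j : ℤ)) ^ n with hR
  have hRbound : |R| < T := by
    rcases Nat.eq_or_lt_of_le hj1 with h1 | h1
    · simp [hR, ← h1, hTpos]
    · -- j' ≥ 2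
      have hRle : |R| ≤ (K : ℤ) * ∑ j ∈ Finset.Icc 1 (j'-1), (n:ℤ) ^ (a j) * ((b j : ℤ)) ^ n := by
        calc |R| ≤ ∑ j ∈ Finset.Icc 1 (j'-1), |P j * (n:ℤ) ^ (a j) * ((b j : ℤ)) ^ n| :=
              Finset.abs_sum_le_sum_abs _ _
        _ ≤ ∑ j ∈ Finset.Icc 1 (j'-1), (K:ℤ) * ((n:ℤ) ^ (a j) * ((b j : ℤ)) ^ n) := by
            apply Finset.sum_le_sum
            intro j hj
            simp only [Finset.mem_Icc] at hj
            rw [abs_mul, abs_mul, abs_pow, abs_pow]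
            have h1 : |P j| ≤ (K:ℤ) := by
              rw [Int.abs_eq_natAbs]
              exact_mod_cast hK j hj.1 (by omega)
            have h2 : |(n:ℤ)| = (n:ℤ) := abs_of_nonneg (by positivity)
            have h3 : |((b j : ℤ))| = (b j : ℤ) := abs_of_nonneg (by positivity)
            rw [h2, h3, mul_assoc]
            apply mul_le_mul_of_nonneg_right h1
            positivity
        _ = (K : ℤ) * ∑ j ∈ Finset.Icc 1 (j'-1), (n:ℤ) ^ (a j) * ((b j : ℤ)) ^ n := by
            rw [Finset.mul_sum]
      have hdom := dom_lemma (b := b) (a := a) (K := K) hC1 (j' - 1) (by omega)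
        (fun j hj1' hj2 => hb j hj1' (by omega))
        (fun j hj1' hj2 => hchain j hj1' (by omega))
        (fun j hj1' hj2 => hCM j hj1' (by omega)) n hn
      have hj'e : j' - 1 + 1 = j' := by omega
      rw [hj'e] at hdom
      have hdomZ : (K : ℤ) * ∑ j ∈ Finset.Icc 1 (j'-1), (n:ℤ) ^ (a j) * ((b j : ℤ)) ^ n < T := by
        rw [hT]
        exact_mod_cast hdom
      exact lt_of_le_of_lt hRle hdomZ
  rw [hsplit]
  constructor
  · intro h
    by_contra hle
    push_neg at hle
    have hle1 : P j' ≤ -1 := by omega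
    have h2 : P j' * T ≤ -T := by nlinarith
    have h3 : R ≤ |R| := le_abs_self R
    have heq : P j' * ((n:ℤ) ^ (a j')) * (((b j' : ℤ)) ^ n) = P j' * T := by rw [hT]; ring
    rw [heq] at h
    linarith [hRbound]
  · intro h
    have h1 : (1:ℤ) ≤ P j' := h
    have h2 : T ≤ P j' * T := le_mul_of_one_le_left hTpos.le h1
    have h3 : -|R| ≤ R := neg_abs_le R
    have : P j' * ((n:ℤ) ^ (a j')) * (((b j' : ℤ)) ^ n) = P j' * T := by rw [hT]; ring
    rw [this]
    linarith [hRbound]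

lemma sign_stable {ℓ : ℕ} {P : ℕ → ℤ} {a b : ℕ → ℕ} {K C : ℕ}
    (hK : ∀ j, 1 ≤ j → j < ℓ → (P j).natAbs ≤ K)
    (hb : ∀ j, 1 ≤ j → j ≤ ℓ → 1 ≤ b j)
    (hchain : ∀ j, 1 ≤ j → j < ℓ → lexGt (b (j+1)) (a (j+1)) (b j) (a j))
    (hC1 : 1 ≤ C) (hCM : ∀ j, 2 ≤ j → j ≤ ℓ → Mdef b a j ≤ C)
    {n n' : ℕ} (hn : 2 * K + C ≤ n) (hn' : 2 * K + C ≤ n') :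
    (0 < ∑ j ∈ Finset.Icc 1 ℓ, P j * (n:ℤ) ^ (a j) * ((b j : ℤ)) ^ n ↔
     0 < ∑ j ∈ Finset.Icc 1 ℓ, P j * (n':ℤ) ^ (a j) * ((b j : ℤ)) ^ n') := by
  by_cases hz : ∀ j ∈ Finset.Icc 1 ℓ, P j = 0
  · have e1 : ∑ j ∈ Finset.Icc 1 ℓ, P j * (n:ℤ) ^ (a j) * ((b j : ℤ)) ^ n = 0 :=
      Finset.sum_eq_zero fun j hj => by rw [hz j hj]; ring
    have e2 : ∑ j ∈ Finset.Icc 1 ℓ, P j * (n':ℤ) ^ (a j) * ((b j : ℤ)) ^ n' = 0 :=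
      Finset.sum_eq_zero fun j hj => by rw [hz j hj]; ring
    rw [e1, e2]
  · push_neg at hz
    set s := (Finset.Icc 1 ℓ).filter (fun j => P j ≠ 0) with hs
    have hne : s.Nonempty := by
      obtain ⟨j, hj, hjne⟩ := hz
      exact ⟨j, Finset.mem_filter.mpr ⟨hj, hjne⟩⟩
    set j' := s.max' hne with hj'
    have hj'mem : j' ∈ Finset.Icc 1 ℓ ∧ P j' ≠ 0 := Finset.mem_filter.mp (s.max'_mem hne)
    have hj'12 := Finset.mem_Icc.mp hj'mem.1
    have hPz : ∀ j, j' < j → j ≤ ℓ → P j = 0 := by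
      intro j hgt hle
      by_contra hne'
      have : j ∈ s := by
        rw [hs, Finset.mem_filter, Finset.mem_Icc]
        exact ⟨⟨by omega, hle⟩, hne'⟩
      have := Finset.le_max' s j this
      omega
    rw [sign_of_sum hj'12.1 hj'12.2 hj'mem.2 hPz hK hb hchain hC1 hCM hn,
        sign_of_sum hj'12.1 hj'12.2 hj'mem.2 hPz hK hb hchain hC1 hCM hn']

lemma eval_sqcupF {d : ℕ} {ι : Type*} (s : Finset ι) (p : ι → MvPolynomial (Fin d) ℤ)
    (f : Fin d → ℤ) :
    MvPolynomial.eval f (sqcupF s p)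
      = ∑ m ∈ s.biUnion fun j => (p j).support,
          ((s.sup fun j => ((p j).coeff m).natAbs : ℕ) : ℤ) * ∏ k ∈ m.support, f k ^ m k := by
  rw [sqcupF, map_sum]
  refine Finset.sum_congr rfl fun m _ => ?_
  rw [MvPolynomial.eval_monomial]
  rfl

lemma sqcupF_eval_nonneg {d : ℕ} {ι : Type*} (s : Finset ι) (p : ι → MvPolynomial (Fin d) ℤ)
    (e : Fin d → ℤ) :
    0 ≤ MvPolynomial.eval (fun k => |e k|) (sqcupF s p) := by
  rw [eval_sqcupF]
  apply Finset.sum_nonneg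
  intro m _
  apply mul_nonneg (by positivity)
  apply Finset.prod_nonneg
  intro k _
  positivity

lemma abs_eval_le_sqcupF {d : ℕ} {ι : Type*} (s : Finset ι) (p : ι → MvPolynomial (Fin d) ℤ)
    {i : ι} (hi : i ∈ s) (e : Fin d → ℤ) :
    |MvPolynomial.eval e (p i)| ≤ MvPolynomial.eval (fun k => |e k|) (sqcupF s p) := by
  rw [eval_sqcupF, MvPolynomial.eval_eq]
  calc |∑ m ∈ (p i).support, MvPolynomial.coeff m (p i) * ∏ k ∈ m.support, e k ^ m k|
      ≤ ∑ m ∈ (p i).support, |MvPolynomial.coeff m (p i) * ∏ k ∈ m.support, e k ^ m k| :=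
        Finset.abs_sum_le_sum_abs _ _
    _ ≤ ∑ m ∈ (p i).support,
          ((s.sup fun j => ((p j).coeff m).natAbs : ℕ) : ℤ) * ∏ k ∈ m.support, |e k| ^ m k := by
        apply Finset.sum_le_sum
        intro m _
        rw [abs_mul, Finset.abs_prod]
        apply mul_le_mul
        · rw [Int.abs_eq_natAbs]
          exact_mod_cast Finset.le_sup (f := fun j => ((p j).coeff m).natAbs) hi
        · apply Finset.prod_le_prod
          · intro k _; positivity
          · intro k _; rw [abs_pow]
        · positivity
        · positivity
    _ ≤ ∑ m ∈ s.biUnion fun j => (p j).support,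
          ((s.sup fun j => ((p j).coeff m).natAbs : ℕ) : ℤ) * ∏ k ∈ m.support, |e k| ^ m k := by
        apply Finset.sum_le_sum_of_subset_of_nonneg
        · intro m hm
          exact Finset.mem_biUnion.mpr ⟨i, hi, hm⟩
        · intro m _ _
          apply mul_nonneg (by positivity)
          exact Finset.prod_nonneg fun k _ => by positivity

/-! ### Statement 10: bound on the stabilization threshold of a terminating tnn-loop -/

/-- The value at `(e, n)` of the over-approximation `⌈npe_α⌉ = Σ_{j=1}^{ℓA α} p_j·n^{a_j}·b_j^n`
(with integer polynomials `pA α j`). -/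
def valOverA {d : ℕ} (ℓA : ℕ → ℕ) (pA : ℕ → ℕ → MvPolynomial (Fin d) ℤ)
    (aA bA : ℕ → ℕ → ℕ) (α : ℕ) (e : Fin d → ℤ) (n : ℕ) : ℚ :=
  ∑ j ∈ Finset.Icc 1 (ℓA α),
    (MvPolynomial.eval e (pA α j) : ℚ) * (n : ℚ) ^ aA α j * (bA α j : ℚ) ^ n

/-- The value at `(e, n)` of `npe_α`, i.e. of `(s₂ - s₁)[x̄/cl(x̄)]` multiplied by the
(least common multiple of all denominators) `Lc α`. -/
def valNpeA {d : ℕ} (cl : Fin d → NPE d) (Lc : ℕ → ℕ)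
    (s₁ s₂ : MvPolynomial (Fin d) ℤ) (α : ℕ) (e : Fin d → ℤ) (n : ℕ) : ℚ :=
  (Lc α : ℚ) *
    MvPolynomial.eval (fun i => evalNPE (cl i) e n)
      (MvPolynomial.map (Int.castRingHom ℚ) (s₂ - s₁))

/-- `C_α = max {1, N₂, M₂, …, N_ℓ, M_ℓ}`. -/
def CA (ℓA : ℕ → ℕ) (aA bA : ℕ → ℕ → ℕ) (α : ℕ) : ℕ :=
  max 1 ((Finset.Icc 2 (ℓA α)).sup fun j => max (Ndef (bA α) (aA α) j) (Mdef (bA α) (aA α) j))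

/-- `⊔ Pol`, where `Pol` is the union of the `Pol_α = {p₁,…,p_{ℓA α - 1}}` over all atoms. -/
def sqcupPol {d : ℕ} (numA : ℕ) (ℓA : ℕ → ℕ) (pA : ℕ → ℕ → MvPolynomial (Fin d) ℤ) :
    MvPolynomial (Fin d) ℤ :=
  sqcupF
    ((Finset.range numA).biUnion fun α => (Finset.Icc 1 (ℓA α - 1)).image fun j => (α, j))
    fun q => pA q.1 q.2

/-- The value of `sth⊔ = 2·⊔Pol + max {n₀, C, D}` at the state `|σ_e|`. -/
def sthB {d : ℕ} (numA : ℕ) (ℓA : ℕ → ℕ) (pA : ℕ → ℕ → MvPolynomial (Fin d) ℤ)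
    (aA bA : ℕ → ℕ → ℕ) (DA : ℕ → ℕ) (n₀ : ℕ) (e : Fin d → ℤ) : ℤ :=
  2 * MvPolynomial.eval (fun i => |e i|) (sqcupPol numA ℓA pA)
    + ((max n₀ (max ((Finset.range numA).sup fun α => CA ℓA aA bA α)
        ((Finset.range numA).sup DA)) : ℕ) : ℤ)

/-- The stabilization threshold `sth_{(ψ,φ,η)}(e)`: the smallest `s` such that the truth
value of `φ` at `η^n(e)` equals its truth value at `η^s(e)`, for all `n ≥ s`. -/
def sth {d : ℕ} (φ : Fml (Fin d)) (η : Fin d → MvPolynomial (Fin d) ℤ)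
    (e : Fin d → ℤ) : ℕ :=
  sInf {s : ℕ | ∀ n ≥ s, (φ.holds ((updFun η)^[n] e) ↔ φ.holds ((updFun η)^[s] e))}

/-- The initial transition `t₀ = (ℓ₀, ψ, id, ℓ)` of a loop (locations: `false = ℓ₀`,
`true = ℓ`). -/
def loopInit {d : ℕ} (ψ : Fml (Fin d)) : Trans Bool (Fin d) :=
  ⟨false, ψ, fun i => MvPolynomial.X i, true⟩

/-- The looping transition `t = (ℓ, φ, η, ℓ)`. -/
def loopTrans {d : ℕ} (φ : Fml (Fin d)) (η : Fin d → MvPolynomial (Fin d) ℤ) :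
    Trans Bool (Fin d) :=
  ⟨true, φ, η, true⟩


lemma eval_map_cast {d : ℕ} (σ : Fin d → ℤ) (p : MvPolynomial (Fin d) ℤ) :
    MvPolynomial.eval (fun i => ((σ i : ℤ) : ℚ)) (MvPolynomial.map (Int.castRingHom ℚ) p)
      = ((MvPolynomial.eval σ p : ℤ) : ℚ) := by
  rw [MvPolynomial.eval_map]
  have h := MvPolynomial.eval₂_comp_left (Int.castRingHom ℚ) (RingHom.id ℤ) σ p
  simp only [RingHom.comp_id] at h
  have h2 : MvPolynomial.eval₂ (RingHom.id ℤ) σ p = MvPolynomial.eval σ p := rfl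
  rw [h2] at h
  exact h.symm

lemma holds_iff_of_atoms {V : Type*} (f : Fml V) (σ τ : V → ℤ)
    (h : ∀ pr ∈ f.atoms, ((MvPolynomial.eval σ pr.1 < MvPolynomial.eval σ pr.2) ↔
      (MvPolynomial.eval τ pr.1 < MvPolynomial.eval τ pr.2))) :
    (f.holds σ ↔ f.holds τ) := by
  induction f with
  | lt p q => exact h (p, q) (by simp [Fml.atoms])
  | and f g ihf ihg =>
      have h1 := ihf (fun pr hpr => h pr (by simp [Fml.atoms, hpr]))
      have h2 := ihg (fun pr hpr => h pr (by simp [Fml.atoms, hpr]))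
      simp only [Fml.holds]
      rw [h1, h2]
  | or f g ihf ihg =>
      have h1 := ihf (fun pr hpr => h pr (by simp [Fml.atoms, hpr]))
      have h2 := ihg (fun pr hpr => h pr (by simp [Fml.atoms, hpr]))
      simp only [Fml.holds]
      rw [h1, h2]

lemma psi_iter {d : ℕ} {ψ : Fml (Fin d)} {η : Fin d → MvPolynomial (Fin d) ℤ}
    (hinv : ∀ e, ψ.holds e → ψ.holds (updFun η e))
    {e : Fin d → ℤ} (he : ψ.holds e) : ∀ n, ψ.holds ((updFun η)^[n] e) := by
  intro n
  induction n with
  | zero => exact he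
  | succ n ih => rw [Function.iterate_succ_apply']; exact hinv _ ih

section Semantics

variable {d : ℕ} (ψ φ : Fml (Fin d)) (η : Fin d → MvPolynomial (Fin d) ℤ)

lemma step_loopInit_iff {c c' : Config Bool (Fin d)} :
    Step Set.univ (loopInit ψ) c c' ↔
      c.1 = false ∧ c'.1 = true ∧ ψ.holds c.2 ∧ c'.2 = c.2 := by
  constructor
  · rintro ⟨h1, h2, h3, h4⟩
    refine ⟨h1, h2, h3, funext fun v => ?_⟩
    simpa [loopInit] using h4 v (Set.mem_univ v)
  · rintro ⟨h1, h2, h3, h4⟩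
    exact ⟨h1, h2, h3, fun v _ => by simp [loopInit, h4]⟩

lemma step_loopTrans_iff {c c' : Config Bool (Fin d)} :
    Step Set.univ (loopTrans φ η) c c' ↔
      c.1 = true ∧ c'.1 = true ∧ φ.holds c.2 ∧ c'.2 = updFun η c.2 := by
  constructor
  · rintro ⟨h1, h2, h3, h4⟩
    refine ⟨h1, h2, h3, funext fun v => ?_⟩
    simpa [loopTrans, updFun] using h4 v (Set.mem_univ v)
  · rintro ⟨h1, h2, h3, h4⟩
    exact ⟨h1, h2, h3, fun v _ => by simp [loopTrans, h4, updFun]⟩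

lemma stepAny_tgt_true {c c' : Config Bool (Fin d)}
    (h : StepAny Set.univ {loopInit ψ, loopTrans φ η} c c') : c'.1 = true := by
  obtain ⟨t, ht, hs⟩ := h
  rcases Finset.mem_insert.mp ht with h | h
  · subst h; exact hs.2.1
  · rw [Finset.mem_singleton] at h; subst h; exact hs.2.1

lemma reach_from_true (τ : Fin d → ℤ) {c : Config Bool (Fin d)}
    (h : Relation.ReflTransGen (StepAny Set.univ {loopInit ψ, loopTrans φ η}) (true, τ) c) :
    ∃ i, c = (true, (updFun η)^[i] τ) ∧ ∀ m < i, φ.holds ((updFun η)^[m] τ) := by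
  induction h with
  | refl => exact ⟨0, rfl, by omega⟩
  | tail hxy hstep ih =>
      obtain ⟨i, rfl, hφm⟩ := ih
      obtain ⟨t, ht, hs⟩ := hstep
      rcases Finset.mem_insert.mp ht with h | h
      · subst h
        rw [step_loopInit_iff] at hs
        simp at hs
      · rw [Finset.mem_singleton] at h; subst h
        rw [step_loopTrans_iff] at hs
        obtain ⟨_, h2, h3, h4⟩ := hs
        refine ⟨i + 1, ?_, ?_⟩
        · refine Prod.ext_iff.mpr ⟨h2, ?_⟩
          rw [h4]; exact (Function.iterate_succ_apply' _ _ _).symm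
        · intro m hm
          rcases Nat.lt_succ_iff_lt_or_eq.mp hm with h | h
          · exact hφm m h
          · subst h; exact h3

lemma reach_from_false (σ₀ : Fin d → ℤ) {c : Config Bool (Fin d)}
    (h : Relation.ReflTransGen (StepAny Set.univ {loopInit ψ, loopTrans φ η}) (false, σ₀) c) :
    c = (false, σ₀) ∨ (ψ.holds σ₀ ∧
      ∃ i, c = (true, (updFun η)^[i] σ₀) ∧ ∀ m < i, φ.holds ((updFun η)^[m] σ₀)) := by
  induction h with
  | refl => left; rfl
  | tail hxy hstep ih =>
      rcases ih with rfl | ⟨hψ0, i, rfl, hφm⟩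
      · obtain ⟨t, ht, hs⟩ := hstep
        rcases Finset.mem_insert.mp ht with h | h
        · subst h
          rw [step_loopInit_iff] at hs
          obtain ⟨_, h2, h3, h4⟩ := hs
          right
          exact ⟨h3, 0, Prod.ext_iff.mpr ⟨h2, h4⟩, by omega⟩
        · rw [Finset.mem_singleton] at h; subst h
          rw [step_loopTrans_iff] at hs
          simp at hs
      · obtain ⟨t, ht, hs⟩ := hstep
        rcases Finset.mem_insert.mp ht with h | h
        · subst h
          rw [step_loopInit_iff] at hs
          simp at hs
        · rw [Finset.mem_singleton] at h; subst h
          rw [step_loopTrans_iff] at hs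
          obtain ⟨_, h2, h3, h4⟩ := hs
          right
          refine ⟨hψ0, i + 1, Prod.ext_iff.mpr ⟨h2, ?_⟩, ?_⟩
          · rw [h4]; exact (Function.iterate_succ_apply' _ _ _).symm
          · intro m hm
            rcases Nat.lt_succ_iff_lt_or_eq.mp hm with h | h
            · exact hφm m h
            · subst h; exact h3

lemma starThen_from_false (σ₀ : Fin d → ℤ) {c' : Config Bool (Fin d)}
    (h : starThen Set.univ {loopInit ψ, loopTrans φ η} (loopTrans φ η) (false, σ₀) c') :
    ψ.holds σ₀ ∧ ∃ i, 1 ≤ i ∧ c' = (true, (updFun η)^[i] σ₀) ∧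
      ∀ m < i, φ.holds ((updFun η)^[m] σ₀) := by
  obtain ⟨mid, hr, hs⟩ := h
  rw [step_loopTrans_iff] at hs
  obtain ⟨h1, h2, h3, h4⟩ := hs
  rcases reach_from_false ψ φ η σ₀ hr with rfl | ⟨hψ0, i, rfl, hφm⟩
  · simp at h1
  · refine ⟨hψ0, i + 1, by omega, Prod.ext_iff.mpr ⟨h2, ?_⟩, ?_⟩
    · rw [h4]; exact (Function.iterate_succ_apply' _ _ _).symm
    · intro m hm
      rcases Nat.lt_succ_iff_lt_or_eq.mp hm with h | h
      · exact hφm m h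
      · subst h; exact h3

lemma starThen_from_true (τ : Fin d → ℤ) {c' : Config Bool (Fin d)}
    (h : starThen Set.univ {loopInit ψ, loopTrans φ η} (loopTrans φ η) (true, τ) c') :
    ∃ i, 1 ≤ i ∧ c' = (true, (updFun η)^[i] τ) ∧ ∀ m < i, φ.holds ((updFun η)^[m] τ) := by
  obtain ⟨mid, hr, hs⟩ := h
  rw [step_loopTrans_iff] at hs
  obtain ⟨h1, h2, h3, h4⟩ := hs
  obtain ⟨i, rfl, hφm⟩ := reach_from_true ψ φ η τ hr
  refine ⟨i + 1, by omega, Prod.ext_iff.mpr ⟨h2, ?_⟩, ?_⟩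
  · rw [h4]; exact (Function.iterate_succ_apply' _ _ _).symm
  · intro m hm
    rcases Nat.lt_succ_iff_lt_or_eq.mp hm with h | h
    · exact hφm m h
    · subst h; exact h3

lemma relPow_loop (σ₀ : Fin d → ℤ) :
    ∀ k, 1 ≤ k → ∀ c', relPow
        (starThen Set.univ {loopInit ψ, loopTrans φ η} (loopTrans φ η)) k (false, σ₀) c' →
      ψ.holds σ₀ ∧ ∃ i, k ≤ i ∧ c' = (true, (updFun η)^[i] σ₀) ∧
        ∀ m < i, φ.holds ((updFun η)^[m] σ₀) := by
  intro k
  induction k with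
  | zero => omega
  | succ k ih =>
    intro _ c' hrel
    obtain ⟨c2, h1, h2⟩ := hrel
    rcases Nat.eq_zero_or_pos k with hk | hk
    · subst hk
      have hc2 : c2 = (false, σ₀) := h1.symm
      subst hc2
      obtain ⟨hψ0, i, hi1, hc', hφm⟩ := starThen_from_false ψ φ η σ₀ h2
      exact ⟨hψ0, i, by omega, hc', hφm⟩
    · obtain ⟨hψ0, i, hki, rfl, hφm⟩ := ih hk c2 h1
      obtain ⟨i', hi'1, hc', hφm'⟩ := starThen_from_true ψ φ η _ h2
      refine ⟨hψ0, i' + i, by omega, ?_, ?_⟩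
      · rw [hc', Function.iterate_add_apply]
      · intro m hm
        rcases lt_or_ge m i with h | h
        · exact hφm m h
        · have h5 := hφm' (m - i) (by omega)
          rw [← Function.iterate_add_apply] at h5
          have he : m - i + i = m := by omega
          rwa [he] at h5

lemma rtg_loc {c mid : Config Bool (Fin d)}
    (h : Relation.ReflTransGen (StepAny Set.univ {loopInit ψ, loopTrans φ η}) c mid) :
    mid = c ∨ mid.1 = true := by
  induction h with
  | refl => left; rfl
  | tail _ hstep _ => right; exact stepAny_tgt_true ψ φ η hstep

lemma relPow_init (σ₀ : Fin d → ℤ) (k : ℕ) (c' : Config Bool (Fin d))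
    (h : relPow (starThen Set.univ {loopInit ψ, loopTrans φ η} (loopInit ψ)) k (false, σ₀) c') :
    k ≤ 1 := by
  by_contra hk
  push_neg at hk
  obtain ⟨m, rfl⟩ : ∃ m, k = m + 2 := ⟨k - 2, by omega⟩
  obtain ⟨c2, hrp, hst⟩ := h
  obtain ⟨c1, _, hst1⟩ := hrp
  have hc2 : c2.1 = true := by
    obtain ⟨mid, _, hs⟩ := hst1
    exact hs.2.1
  obtain ⟨mid, hr, hs⟩ := hst
  have hmidf : mid.1 = false := hs.1
  rcases rtg_loc ψ φ η hr with heq | h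
  · rw [heq, hc2] at hmidf; cases hmidf
  · rw [h] at hmidf; cases hmidf

end Semantics

/-- Bound on the stabilization threshold, Thm. 16 of the paper:
for a terminating tnn-loop `(ψ, φ, η)` with normalized closed form `cl` (start value
`n₀`) and eventually non-positive over-approximations `⌈npe_α⌉` (with constants `D_α`)
for all atoms `α` of `φ`, the polynomial `sth⊔ = 2·⊔Pol + max {n₀, C, D}`, evaluated at
`|σ_e|`, bounds the stabilization threshold `sth_{(ψ,φ,η)}(e)` for every `e ⊨ ψ ∧ φ`;
consequently `RBglo(t₀) = 1` and `RBglo(t) = sth⊔` is a global runtime bound for the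
loop program. -/
theorem stabilization_threshold_bound {d : ℕ} (ψ φ : Fml (Fin d))
    (η : Fin d → MvPolynomial (Fin d) ℤ) (htnn : IsTNN η)
    (hinv : ∀ e : Fin d → ℤ, ψ.holds e → ψ.holds (updFun η e))
    (hterm : ¬ ∃ e : Fin d → ℤ, ψ.holds e ∧ ∀ n : ℕ, φ.holds ((updFun η)^[n] e))
    -- normalized closed form for η with start value n₀
    (n₀ : ℕ) (cl : Fin d → NPE d)
    (hclb : ∀ i : Fin d, ∀ tr ∈ cl i, 1 ≤ tr.2.2)
    (hcl : ∀ (e : Fin d → ℤ) (n : ℕ), n₀ ≤ n → ∀ i : Fin d,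
      evalNPE (cl i) e n = (((updFun η)^[n] e) i : ℚ))
    -- for every atom α of φ: the multiplier Lc α (the lcm of the denominators) and the
    -- eventually non-positive over-approximation ⌈npe_α⌉ = Σ_{j=1}^{ℓA α} p_j·n^{a_j}·b_j^n
    -- with constant DA α
    (Lc ℓA : ℕ → ℕ) (pA : ℕ → ℕ → MvPolynomial (Fin d) ℤ) (aA bA : ℕ → ℕ → ℕ)
    (DA : ℕ → ℕ)
    (hLc : ∀ α < φ.atoms.length, 1 ≤ Lc α)
    (hpne : ∀ α < φ.atoms.length, ∀ j, 1 ≤ j → j ≤ ℓA α → pA α j ≠ 0)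
    (hbA : ∀ α < φ.atoms.length, ∀ j, 1 ≤ j → j ≤ ℓA α → 1 ≤ bA α j)
    (hchainA : ∀ α < φ.atoms.length, ∀ j, 1 ≤ j → j < ℓA α →
      lexGt (bA α (j + 1)) (aA α (j + 1)) (bA α j) (aA α j))
    -- ⌈npe_α⌉ over-approximates npe_α for n ≥ DA α (soundness of the over-approximation
    -- w.r.t. ψ' = ψ ∧ φ, with its associated constant DA α)
    (hover : ∀ α (hα : α < φ.atoms.length), ∀ e : Fin d → ℤ, ψ.holds e → φ.holds e →
      ∀ n ≥ DA α,
        valNpeA cl Lc (φ.atoms.get ⟨α, hα⟩).1 (φ.atoms.get ⟨α, hα⟩).2 α e n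
          ≤ valOverA ℓA pA aA bA α e n)
    -- ⌈npe_α⌉ is eventually non-positive: it equals npe_α, or its value is non-positive
    -- for all large enough n, whenever e ⊨ ψ' = ψ ∧ φ
    (hevnp : ∀ α (hα : α < φ.atoms.length),
      (∀ (e : Fin d → ℤ) (n : ℕ),
          valOverA ℓA pA aA bA α e n
            = valNpeA cl Lc (φ.atoms.get ⟨α, hα⟩).1 (φ.atoms.get ⟨α, hα⟩).2 α e n)
        ∨ (∀ e : Fin d → ℤ, ψ.holds e → φ.holds e →
            ∃ m : ℕ, ∀ n ≥ m, valOverA ℓA pA aA bA α e n ≤ 0)) :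
    -- (1) |σ_e|(sth⊔) ≥ sth_{(ψ,φ,η)}(e) for all e ⊨ ψ ∧ φ
    (∀ e : Fin d → ℤ, ψ.holds e → φ.holds e →
      (sth φ η e : ℤ) ≤ sthB φ.atoms.length ℓA pA aA bA DA n₀ e) ∧
    -- (2) RBglo(t) = sth⊔ is a global runtime bound for the looping transition t …
    (∀ (σ₀ : Fin d → ℤ) (k : ℕ) (c' : Config Bool (Fin d)),
      relPow
        (starThen (Set.univ : Set (Fin d)) {loopInit ψ, loopTrans φ η} (loopTrans φ η)) k
        (false, σ₀) c' →
      (k : ℤ) ≤ sthB φ.atoms.length ℓA pA aA bA DA n₀ σ₀) ∧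
    -- … and RBglo(t₀) = 1 is a global runtime bound for the initial transition t₀
    (∀ (σ₀ : Fin d → ℤ) (k : ℕ) (c' : Config Bool (Fin d)),
      relPow (starThen (Set.univ : Set (Fin d)) {loopInit ψ, loopTrans φ η} (loopInit ψ)) k
        (false, σ₀) c' →
      k ≤ 1) := by
  classical
  set numA := φ.atoms.length with hnumA
  set Cmax : ℕ := max n₀ (max ((Finset.range numA).sup fun α => CA ℓA aA bA α)
      ((Finset.range numA).sup DA)) with hCmax
  set Qf : (Fin d → ℤ) → ℤ :=
    fun e => MvPolynomial.eval (fun i => |e i|) (sqcupPol numA ℓA pA) with hQf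
  have hQnonneg : ∀ e, 0 ≤ Qf e := fun e => sqcupF_eval_nonneg _ _ e
  set S0 : (Fin d → ℤ) → ℕ := fun e => 2 * (Qf e).toNat + Cmax with hS0def
  have hS0 : ∀ e, (S0 e : ℤ) = sthB numA ℓA pA aA bA DA n₀ e := by
    intro e
    have h := hQnonneg e
    simp only [hS0def, sthB, hCmax]
    push_cast [Int.toNat_of_nonneg h]
    ring
  -- bound on the coefficients
  have hKbound : ∀ (e : Fin d → ℤ), ∀ α, α < numA → ∀ j, 1 ≤ j → j < ℓA α →
      (MvPolynomial.eval e (pA α j)).natAbs ≤ (Qf e).toNat := by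
    intro e α hα j hj1 hj2
    have hmem : (α, j) ∈ (Finset.range numA).biUnion
        (fun α => (Finset.Icc 1 (ℓA α - 1)).image fun j => (α, j)) :=
      Finset.mem_biUnion.mpr ⟨α, Finset.mem_range.mpr hα,
        Finset.mem_image.mpr ⟨j, Finset.mem_Icc.mpr ⟨hj1, by omega⟩, rfl⟩⟩
    have h2 : |MvPolynomial.eval e (pA α j)| ≤ Qf e := by
      have := abs_eval_le_sqcupF _ (fun q : ℕ × ℕ => pA q.1 q.2) hmem e
      simpa [hQf, sqcupPol] using this
    rw [Int.abs_eq_natAbs] at h2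
    omega
  have hCA : ∀ α, α < numA → ∀ j, 2 ≤ j → j ≤ ℓA α → Mdef (bA α) (aA α) j ≤ Cmax := by
    intro α hα j hj2 hjl
    have h1 : Mdef (bA α) (aA α) j ≤ CA ℓA aA bA α := by
      refine le_trans ?_ (le_max_right 1 _)
      refine le_trans (le_max_right (Ndef (bA α) (aA α) j) _)
        (Finset.le_sup (f := fun j => max (Ndef (bA α) (aA α) j) (Mdef (bA α) (aA α) j))
          (Finset.mem_Icc.mpr ⟨hj2, hjl⟩))
    calc Mdef (bA α) (aA α) j ≤ CA ℓA aA bA α := h1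
      _ ≤ (Finset.range numA).sup fun α => CA ℓA aA bA α :=
          Finset.le_sup (Finset.mem_range.mpr hα)
      _ ≤ Cmax := le_trans (le_max_left _ _) (le_max_right _ _)
  have hCmax1 : ∀ α, α < numA → 1 ≤ Cmax := by
    intro α hα
    calc (1:ℕ) ≤ CA ℓA aA bA α := le_max_left 1 _
      _ ≤ (Finset.range numA).sup fun α => CA ℓA aA bA α :=
          Finset.le_sup (Finset.mem_range.mpr hα)
      _ ≤ Cmax := le_trans (le_max_left _ _) (le_max_right _ _)
  have hDAle : ∀ α, α < numA → DA α ≤ Cmax := by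
    intro α hα
    calc DA α ≤ (Finset.range numA).sup DA := Finset.le_sup (Finset.mem_range.mpr hα)
      _ ≤ Cmax := le_trans (le_max_right _ _) (le_max_right _ _)
  have hn₀le : ∀ e, n₀ ≤ S0 e := by
    intro e
    have : n₀ ≤ Cmax := le_max_left _ _
    simp only [hS0def]
    omega
  -- per-atom stability
  have hstab : ∀ (e : Fin d → ℤ), ψ.holds e → φ.holds e → ∀ α (hα : α < numA),
      ∀ n, S0 e ≤ n →
      ((MvPolynomial.eval ((updFun η)^[n] e) (φ.atoms.get ⟨α, hα⟩).1
          < MvPolynomial.eval ((updFun η)^[n] e) (φ.atoms.get ⟨α, hα⟩).2)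
        ↔ (MvPolynomial.eval ((updFun η)^[S0 e] e) (φ.atoms.get ⟨α, hα⟩).1
          < MvPolynomial.eval ((updFun η)^[S0 e] e) (φ.atoms.get ⟨α, hα⟩).2)) := by
    intro e hψe hφe α hα n hn
    set G : ℕ → ℤ := fun m => ∑ j ∈ Finset.Icc 1 (ℓA α),
      MvPolynomial.eval e (pA α j) * (m:ℤ) ^ (aA α j) * ((bA α j : ℤ)) ^ m with hG
    have hGval : ∀ m : ℕ, valOverA ℓA pA aA bA α e m = ((G m : ℤ) : ℚ) := by
      intro m
      rw [valOverA, hG]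
      push_cast
      rfl
    have hsign : ∀ m m', S0 e ≤ m → S0 e ≤ m' → (0 < G m ↔ 0 < G m') := by
      intro m m' hm hm'
      exact sign_stable (K := (Qf e).toNat) (C := Cmax)
        (fun j h1 h2 => hKbound e α hα j h1 h2)
        (fun j h1 h2 => hbA α hα j h1 h2)
        (fun j h1 h2 => hchainA α hα j h1 h2)
        (hCmax1 α hα) (fun j h1 h2 => hCA α hα j h1 h2) hm hm'
    have hatomiff : ∀ m, n₀ ≤ m →
        ((MvPolynomial.eval ((updFun η)^[m] e) (φ.atoms.get ⟨α, hα⟩).1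
            < MvPolynomial.eval ((updFun η)^[m] e) (φ.atoms.get ⟨α, hα⟩).2)
          ↔ 0 < valNpeA cl Lc (φ.atoms.get ⟨α, hα⟩).1 (φ.atoms.get ⟨α, hα⟩).2 α e m) := by
      intro m hm
      have hcleq : (fun i => evalNPE (cl i) e m)
          = (fun i => ((((updFun η)^[m] e) i : ℤ) : ℚ)) := by
        funext i; exact hcl e m hm i
      have hval : valNpeA cl Lc (φ.atoms.get ⟨α, hα⟩).1 (φ.atoms.get ⟨α, hα⟩).2 α e m
          = (Lc α : ℚ) * ((MvPolynomial.eval ((updFun η)^[m] e)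
              ((φ.atoms.get ⟨α, hα⟩).2 - (φ.atoms.get ⟨α, hα⟩).1) : ℤ) : ℚ) := by
        rw [valNpeA, hcleq, eval_map_cast]
      rw [hval, map_sub]
      have hLcpos : (0:ℚ) < (Lc α : ℚ) := by exact_mod_cast hLc α hα
      constructor
      · intro h
        apply mul_pos hLcpos
        have : (0:ℤ) < MvPolynomial.eval ((updFun η)^[m] e) (φ.atoms.get ⟨α, hα⟩).2
            - MvPolynomial.eval ((updFun η)^[m] e) (φ.atoms.get ⟨α, hα⟩).1 := by omega
        exact_mod_cast this
      · intro h
        have h2 : (0:ℚ) < ((MvPolynomial.eval ((updFun η)^[m] e) (φ.atoms.get ⟨α, hα⟩).2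
            - MvPolynomial.eval ((updFun η)^[m] e) (φ.atoms.get ⟨α, hα⟩).1 : ℤ) : ℚ) := by
          nlinarith
        have h3 : (0:ℤ) < MvPolynomial.eval ((updFun η)^[m] e) (φ.atoms.get ⟨α, hα⟩).2
            - MvPolynomial.eval ((updFun η)^[m] e) (φ.atoms.get ⟨α, hα⟩).1 := by
          exact_mod_cast h2
        omega
    rcases hevnp α hα with heq | hev
    · rw [hatomiff n (le_trans (hn₀le e) hn), hatomiff (S0 e) (hn₀le e),
        ← heq e n, ← heq e (S0 e), hGval, hGval, Int.cast_pos, Int.cast_pos]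
      exact hsign n (S0 e) hn le_rfl
    · obtain ⟨m, hm⟩ := hev e hψe hφe
      have hGnpos : ∀ m', S0 e ≤ m' → ¬ (0 < G m') := by
        intro m' hm' hpos
        have h1 : G (max m (S0 e)) ≤ 0 := by
          have h2 := hm (max m (S0 e)) (le_max_left _ _)
          rw [hGval] at h2
          exact_mod_cast h2
        have := (hsign m' (max m (S0 e)) hm' (le_max_right _ _)).mp hpos
        omega
      have hFalse : ∀ m', S0 e ≤ m' →
          ¬ (MvPolynomial.eval ((updFun η)^[m'] e) (φ.atoms.get ⟨α, hα⟩).1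
            < MvPolynomial.eval ((updFun η)^[m'] e) (φ.atoms.get ⟨α, hα⟩).2) := by
        intro m' hm' hlt
        have h1 := (hatomiff m' (le_trans (hn₀le e) hm')).mp hlt
        have h2 := hover α hα e hψe hφe m'
          (le_trans (le_trans (hDAle α hα) (by simp only [hS0def]; omega)) hm')
        rw [hGval] at h2
        have h3 : (0:ℚ) < ((G m' : ℤ) : ℚ) := lt_of_lt_of_le h1 h2
        exact hGnpos m' hm' (by exact_mod_cast h3)
      simp only [hFalse n hn, hFalse (S0 e) le_rfl]
  -- formula-level stability
  have hφstab : ∀ (e : Fin d → ℤ), ψ.holds e → φ.holds e → ∀ n, S0 e ≤ n →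
      (φ.holds ((updFun η)^[n] e) ↔ φ.holds ((updFun η)^[S0 e] e)) := by
    intro e hψe hφe n hn
    apply holds_iff_of_atoms
    intro pr hpr
    obtain ⟨⟨α, hα⟩, hget⟩ := List.mem_iff_get.mp hpr
    rw [← hget]
    exact hstab e hψe hφe α hα n hn
  have hmem : ∀ (e : Fin d → ℤ), ψ.holds e → φ.holds e → sth φ η e ≤ S0 e := by
    intro e hψe hφe
    exact Nat.sInf_le (fun n hn => hφstab e hψe hφe n hn)
  have hφfalse : ∀ (e : Fin d → ℤ), ψ.holds e → φ.holds e → ∀ n, S0 e ≤ n →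
      ¬ φ.holds ((updFun η)^[n] e) := by
    intro e hψe hφe n hn hcon
    have hs0 : φ.holds ((updFun η)^[S0 e] e) := (hφstab e hψe hφe n hn).mp hcon
    apply hterm
    refine ⟨(updFun η)^[S0 e] e, psi_iter hinv hψe _, fun n' => ?_⟩
    rw [← Function.iterate_add_apply]
    exact (hφstab e hψe hφe (n' + S0 e) (by omega)).mpr hs0
  refine ⟨?_, ?_, ?_⟩
  · intro e hψe hφe
    rw [← hS0 e]
    exact_mod_cast hmem e hψe hφe
  · intro σ₀ k c' hrel
    rcases Nat.eq_zero_or_pos k with hk | hk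
    · subst hk
      rw [← hS0 σ₀]
      exact_mod_cast Nat.zero_le _
    · obtain ⟨hψ0, i, hki, hc', hφi⟩ := relPow_loop ψ φ η σ₀ k hk c' hrel
      have hφ0 : φ.holds σ₀ := by
        have := hφi 0 (by omega)
        simpa using this
      have hiS0 : i ≤ S0 σ₀ := by
        by_contra h
        push_neg at h
        exact hφfalse σ₀ hψ0 hφ0 (S0 σ₀) le_rfl (hφi (S0 σ₀) h)
      rw [← hS0 σ₀]
      exact_mod_cast le_trans hki hiS0
  · intro σ₀ k c' hrel
    exact relPow_init ψ φ η σ₀ k c' hrel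

end Koat
end
end

section
/- Let (ψ, φ, η) be a tnn-loop over ℤ^d that terminates, i.e., there is no e ∈ ℤ^d satisfying ψ such that φ holds at η^n(e) for all n ∈ ℕ. Then there exists a polynomial q in d variables with natural-number coefficients such that for every e = (e_1,...,e_d) ∈ ℤ^d satisfying ψ and φ: sup{k ∈ ℕ : φ holds at η^i(e) for all i < k} ≤ q(|e_1|,...,|e_d|). In other words, every terminating tnn-loop has a polynomial runtime bound in the absolute values of its inputs. -/
open scoped Classical

noncomputable section

namespace Koat

/-! Along a run of a tnn-loop each coordinate satisfies `xᵢ(n+1) = cᵢ·xᵢ(n) + pᵢ(x_{i+1}(n), …)`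
with `cᵢ ≥ 0`, so by downward induction on `i` it is eventually, uniformly in the input `e`, a
normalized poly-exponential expression `∑ qⱼ(e)·n^aⱼ·bⱼ^n` with `bⱼ ≥ 1` and `qⱼ ∈ ℚ[x]`; the
inhomogeneous recurrences are solved by polynomials `P` with `b·P(n+1) = c·P(n) + n^a`. The same
then holds for every atom `s₂ - s₁` evaluated along the run. At integer points `|qⱼ(e)|` is bounded
by a polynomial in `|e|` and, when nonzero, is at least `1/D` for a common denominator `D`, so once
`n` exceeds a polynomial in `|e|` the term with the lexicographically largest `(bⱼ, aⱼ)` among those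
with `qⱼ(e) ≠ 0` dominates and fixes the sign. Hence the truth value of the guard is constant from
step `N = Q(|e|)` on; if the guard held at step `N`, the run from `η^N(e)`, which satisfies the
invariant, would never terminate. So every run stops within `Q(|e|)` steps.
-/

section ShiftEquation

open Polynomial

variable {K : Type*} [Field K]

def shiftSub (b c : K) : K[X] →ₗ[K] K[X] := b • taylor 1 - c • LinearMap.id

lemma coeff_shiftSub_X_pow (b c : K) (k m : ℕ) :
    (shiftSub b c (X ^ k)).coeff m = b * k.choose m - if m = k then c else 0 := by
  simp [shiftSub, coeff_X_add_one_pow, coeff_X_pow]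

lemma X_pow_mem_range_shiftSub [CharZero K] {b : K} (hb : b ≠ 0) (c : K) (a : ℕ) :
    X ^ a ∈ LinearMap.range (shiftSub b c) := by
  induction a using Nat.strong_induction_on with
  | _ a ih =>
  have hlow : degreeLT K a ≤ LinearMap.range (shiftSub b c) := by
    classical
    rw [degreeLT_eq_span_X_pow, Submodule.span_le]
    intro _ hp
    obtain ⟨k, hk, rfl⟩ := Finset.mem_image.1 hp
    exact ih k (Finset.mem_range.1 hk)
  -- `shiftSub b c (X ^ k)` has leading term `κ • X ^ a`, `κ ≠ 0`, for `k = a` if `b ≠ c` and for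
  -- `k = a + 1` if `b = c`
  obtain ⟨k, κ, hκ, hk⟩ : ∃ k, ∃ κ : K, κ ≠ 0 ∧
      shiftSub b c (X ^ k) - κ • X ^ a ∈ degreeLT K a := by
    by_cases hbc : b = c
    · refine ⟨a + 1, b * (a + 1), mul_ne_zero hb (Nat.cast_add_one_ne_zero a), ?_⟩
      rw [mem_degreeLT, degree_lt_iff_coeff_zero]
      intro m hm
      simp only [coeff_sub, coeff_smul, coeff_shiftSub_X_pow, coeff_X_pow, smul_eq_mul, hbc]
      rcases hm.eq_or_lt with rfl | hm
      · simp [Nat.choose_succ_self_right]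
      rcases (Nat.succ_le_of_lt hm).eq_or_lt with rfl | hm'
      · simp
      · simp [Nat.choose_eq_zero_of_lt hm', hm'.ne', hm.ne']
    · refine ⟨a, b - c, sub_ne_zero.2 hbc, ?_⟩
      rw [mem_degreeLT, degree_lt_iff_coeff_zero]
      intro m hm
      simp only [coeff_sub, coeff_smul, coeff_shiftSub_X_pow, coeff_X_pow, smul_eq_mul]
      rcases hm.eq_or_lt with rfl | hm
      · simp
      · simp [Nat.choose_eq_zero_of_lt hm, hm.ne']
  have := Submodule.smul_mem _ κ⁻¹
    (sub_mem (LinearMap.mem_range_self _ (X ^ k)) (hlow hk))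
  rwa [sub_sub_cancel, smul_smul, inv_mul_cancel₀ hκ, one_smul] at this

lemma exists_eval_shift_eq [CharZero K] {b : K} (hb : b ≠ 0) (c : K) (a : ℕ) :
    ∃ P : K[X], ∀ x : K, b * P.eval (x + 1) = c * P.eval x + x ^ a := by
  obtain ⟨P, hP⟩ := X_pow_mem_range_shiftSub hb c a
  refine ⟨P, fun x => ?_⟩
  have := congrArg (eval x) hP
  simp only [shiftSub, LinearMap.sub_apply, LinearMap.smul_apply, eval_sub, eval_smul,
    taylor_eval, LinearMap.id_apply, eval_pow, eval_X, smul_eq_mul] at this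
  linear_combination this

end ShiftEquation

open MvPolynomial

variable {d : ℕ}

lemma evalNPE_cons (t : MvPolynomial (Fin d) ℚ × ℕ × ℕ) (l : NPE d) (e : Fin d → ℤ) (n : ℕ) :
    evalNPE (t :: l) e n =
      eval (fun i => (e i : ℚ)) t.1 * (n : ℚ) ^ t.2.1 * (t.2.2 : ℚ) ^ n + evalNPE l e n := by
  simp [evalNPE]

lemma evalNPE_append (l₁ l₂ : NPE d) (e : Fin d → ℤ) (n : ℕ) :
    evalNPE (l₁ ++ l₂) e n = evalNPE l₁ e n + evalNPE l₂ e n := by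
  simp [evalNPE]

def npeMul (l₁ l₂ : NPE d) : NPE d :=
  l₁.flatMap fun t₁ => l₂.map fun t₂ => (t₁.1 * t₂.1, t₁.2.1 + t₂.2.1, t₁.2.2 * t₂.2.2)

lemma evalNPE_npeMul (l₁ l₂ : NPE d) (e : Fin d → ℤ) (n : ℕ) :
    evalNPE (npeMul l₁ l₂) e n = evalNPE l₁ e n * evalNPE l₂ e n := by
  induction l₁ with
  | nil => simp [npeMul, evalNPE]
  | cons t l₁ ih =>
    rw [npeMul, List.flatMap_cons, evalNPE_append, ← npeMul, ih, evalNPE_cons, add_mul]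
    congr 1
    simp only [evalNPE, List.map_map, ← List.sum_map_mul_left]
    congr 1
    refine List.map_congr_left fun t₂ _ => ?_
    simp only [Function.comp_apply, map_mul, Nat.cast_mul, pow_add, mul_pow]
    ring

def npePolyTerm (q : MvPolynomial (Fin d) ℚ) (P : Polynomial ℚ) (b : ℕ) : NPE d :=
  (List.range (P.natDegree + 1)).map fun k => (C (P.coeff k) * q, k, b)

lemma evalNPE_npePolyTerm (q : MvPolynomial (Fin d) ℚ) (P : Polynomial ℚ) (b : ℕ)
    (e : Fin d → ℤ) (n : ℕ) :
    evalNPE (npePolyTerm q P b) e n =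
      eval (fun i => (e i : ℚ)) q * P.eval (n : ℚ) * (b : ℚ) ^ n := by
  rw [Polynomial.eval_eq_sum_range, Finset.mul_sum, Finset.sum_mul, Finset.sum_eq_multiset_sum,
    Finset.range_val, Multiset.range, Multiset.map_coe, Multiset.sum_coe, evalNPE, npePolyTerm,
    List.map_map]
  refine congrArg List.sum (List.map_congr_left fun k _ => ?_)
  simp only [Function.comp_apply, map_mul, eval_C]
  ring

lemma exists_evalNPE_eq_eval (l : NPE d) (n : ℕ) :
    ∃ q : MvPolynomial (Fin d) ℚ, ∀ e, evalNPE l e n = eval (fun i => (e i : ℚ)) q := by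
  induction l with
  | nil => exact ⟨0, by simp [evalNPE]⟩
  | cons t l ih =>
    obtain ⟨q, hq⟩ := ih
    exact ⟨C ((n : ℚ) ^ t.2.1 * (t.2.2 : ℚ) ^ n) * t.1 + q, fun e => by
      rw [evalNPE_cons, hq, map_add, map_mul, eval_C]; ring⟩

def IsEventuallyNPE (f : (Fin d → ℤ) → ℕ → ℚ) : Prop :=
  ∃ (l : NPE d) (n₀ : ℕ), (∀ t ∈ l, 1 ≤ t.2.2) ∧ ∀ n ≥ n₀, ∀ e, f e n = evalNPE l e n

namespace IsEventuallyNPE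

lemma const (q : MvPolynomial (Fin d) ℚ) :
    IsEventuallyNPE fun e (_ : ℕ) => eval (fun i => (e i : ℚ)) q :=
  ⟨[(q, 0, 1)], 0, by simp, fun n _ e => by simp [evalNPE]⟩

lemma add {f g : (Fin d → ℤ) → ℕ → ℚ} (hf : IsEventuallyNPE f) (hg : IsEventuallyNPE g) :
    IsEventuallyNPE fun e n => f e n + g e n := by
  obtain ⟨l₁, n₁, hl₁, hf⟩ := hf
  obtain ⟨l₂, n₂, hl₂, hg⟩ := hg
  refine ⟨l₁ ++ l₂, max n₁ n₂, fun t ht => ?_, fun n hn e => ?_⟩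
  · rcases List.mem_append.1 ht with ht | ht
    exacts [hl₁ t ht, hl₂ t ht]
  · dsimp only
    rw [evalNPE_append, hf n (le_of_max_le_left hn), hg n (le_of_max_le_right hn)]

lemma mul {f g : (Fin d → ℤ) → ℕ → ℚ} (hf : IsEventuallyNPE f) (hg : IsEventuallyNPE g) :
    IsEventuallyNPE fun e n => f e n * g e n := by
  obtain ⟨l₁, n₁, hl₁, hf⟩ := hf
  obtain ⟨l₂, n₂, hl₂, hg⟩ := hg
  refine ⟨npeMul l₁ l₂, max n₁ n₂, fun t ht => ?_, fun n hn e => ?_⟩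
  · obtain ⟨t₁, ht₁, ht⟩ := List.mem_flatMap.1 ht
    obtain ⟨t₂, ht₂, rfl⟩ := List.mem_map.1 ht
    exact Nat.one_le_iff_ne_zero.2 (mul_ne_zero (Nat.one_le_iff_ne_zero.1 (hl₁ t₁ ht₁))
      (Nat.one_le_iff_ne_zero.1 (hl₂ t₂ ht₂)))
  · dsimp only
    rw [evalNPE_npeMul, hf n (le_of_max_le_left hn), hg n (le_of_max_le_right hn)]

lemma aeval_of_forall {x : Fin d → (Fin d → ℤ) → ℕ → ℚ} (hx : ∀ j, IsEventuallyNPE (x j))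
    (p : MvPolynomial (Fin d) ℤ) : IsEventuallyNPE fun e n => aeval (fun j => x j e n) p := by
  induction p using MvPolynomial.induction_on with
  | C z => simpa using const (d := d) (C (z : ℚ))
  | add p q hp hq => simpa using hp.add hq
  | mul_X p j hp => simpa using hp.mul (hx j)

lemma aeval {x : Fin d → (Fin d → ℤ) → ℕ → ℚ} (p : MvPolynomial (Fin d) ℤ)
    (hx : ∀ j ∈ p.vars, IsEventuallyNPE (x j)) :
    IsEventuallyNPE fun e n => aeval (fun j => x j e n) p := by
  have key := aeval_of_forall (x := fun j e n => if j ∈ p.vars then x j e n else 0) (fun j => by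
    by_cases hj : j ∈ p.vars
    · simpa [hj] using hx j hj
    · simpa [hj] using const (d := d) 0) p
  convert key using 3 with e n
  exact eval₂Hom_congr' rfl (fun j hj _ => by simp [hj]) rfl

lemma exists_particular_solution (c : ℕ) (l : NPE d) (hl : ∀ t ∈ l, 1 ≤ t.2.2) :
    ∃ lp : NPE d, (∀ t ∈ lp, 1 ≤ t.2.2) ∧
      ∀ e n, evalNPE lp e (n + 1) = c * evalNPE lp e n + evalNPE l e n := by
  induction l with
  | nil => exact ⟨[], by simp, fun e n => by simp [evalNPE]⟩
  | cons t l ih =>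
    obtain ⟨lp, hlp, hrec⟩ := ih fun t' ht' => hl t' (List.mem_cons_of_mem t ht')
    have hb : 1 ≤ t.2.2 := hl t List.mem_cons_self
    have hb₀ : (t.2.2 : ℚ) ≠ 0 := by exact_mod_cast Nat.one_le_iff_ne_zero.1 hb
    obtain ⟨P, hP⟩ := exists_eval_shift_eq hb₀ c t.2.1
    refine ⟨npePolyTerm t.1 P t.2.2 ++ lp, fun t' ht' => ?_, fun e n => ?_⟩
    · rcases List.mem_append.1 ht' with ht' | ht'
      · obtain ⟨k, -, rfl⟩ := List.mem_map.1 ht'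
        exact hb
      · exact hlp t' ht'
    · simp only [evalNPE_append, evalNPE_cons, evalNPE_npePolyTerm, hrec]
      push_cast
      linear_combination eval (fun i => (e i : ℚ)) t.1 * (t.2.2 : ℚ) ^ n * hP n

lemma of_rec {y g : (Fin d → ℤ) → ℕ → ℚ} (c : ℕ) (hg : IsEventuallyNPE g)
    (hy : ∀ n, ∃ q : MvPolynomial (Fin d) ℚ, ∀ e, y e n = eval (fun i => (e i : ℚ)) q)
    (hrec : ∀ e n, y e (n + 1) = c * y e n + g e n) : IsEventuallyNPE y := by
  obtain ⟨l, n₀, hl, hg⟩ := hg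
  obtain ⟨lp, hlp, hrecp⟩ := exists_particular_solution c l hl
  obtain ⟨q₀, hq₀⟩ := hy n₀
  obtain ⟨qp, hqp⟩ := exists_evalNPE_eq_eval lp n₀
  have hhom : ∀ n ≥ n₀, ∀ e, y e n - evalNPE lp e n =
      (c : ℚ) ^ (n - n₀) * (eval (fun i => (e i : ℚ)) q₀ - eval (fun i => (e i : ℚ)) qp) := by
    intro n hn e
    induction n, hn using Nat.le_induction with
    | base => simp [hq₀, hqp]
    | succ n hn ih =>
      rw [hrec, hrecp, hg n hn, Nat.sub_add_comm hn, pow_succ]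
      linear_combination (c : ℚ) * ih
  -- the homogeneous part `c ^ (n - n₀) * _` has base `c`, or vanishes for `n > n₀` if `c = 0`
  let lh : NPE d := if c = 0 then [] else [(C (((c : ℚ) ^ n₀)⁻¹) * (q₀ - qp), 0, c)]
  refine ⟨lp ++ lh, n₀ + 1, fun t ht => ?_, fun n hn e => ?_⟩
  · rcases List.mem_append.1 ht with ht | ht
    · exact hlp t ht
    · by_cases hc : c = 0 <;> simp_all [lh, Nat.one_le_iff_ne_zero]
  · rw [evalNPE_append, ← sub_eq_iff_eq_add', hhom n (by omega), pow_sub_of_lt _ hn]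
    by_cases hc : c = 0
    · simp [lh, hc, zero_pow (by omega : n ≠ 0), evalNPE]
    · simp only [lh, hc, if_false, evalNPE, List.map_cons, List.map_nil, List.sum_cons,
        List.sum_nil, map_mul, map_sub, eval_C, pow_zero, mul_one, add_zero]
      ring

end IsEventuallyNPE

lemma iterate_updFun_apply (η : Fin d → MvPolynomial (Fin d) ℤ) (n : ℕ) (e : Fin d → ℤ)
    (i : Fin d) : (updFun η)^[n] e i = eval e ((bind₁ η)^[n] (X i)) := by
  induction n generalizing e with
  | zero => simp
  | succ n ih =>
    rw [Function.iterate_succ_apply, ih, Function.iterate_succ_apply']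
    exact (eval₂Hom_bind₁ (RingHom.id ℤ) e η _).symm

lemma intCast_eval_eq_aeval (x : Fin d → ℤ) (p : MvPolynomial (Fin d) ℤ) :
    ((eval x p : ℤ) : ℚ) = aeval (fun j => (x j : ℚ)) p := by
  simpa [Function.comp_def] using (aeval_algebraMap_apply (B := ℚ) x p).symm

lemma isEventuallyNPE_iterate_apply {η : Fin d → MvPolynomial (Fin d) ℤ} {c : Fin d → ℤ}
    {p : Fin d → MvPolynomial (Fin d) ℤ} (hη : IsTriangular η c p) (hc : ∀ i, 0 ≤ c i)
    (i : Fin d) : IsEventuallyNPE fun e n => ((updFun η)^[n] e i : ℚ) := by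
  induction i using WellFoundedGT.induction with
  | _ i ih =>
  refine IsEventuallyNPE.of_rec (c i).toNat
    (IsEventuallyNPE.aeval (p i) fun j hj => ih j ((hη i).2 j hj))
    (fun n => ⟨map (Int.castRingHom ℚ) ((bind₁ η)^[n] (X i)), fun e => ?_⟩) (fun e n => ?_)
  · rw [iterate_updFun_apply, intCast_eval_eq_aeval, aeval_def, eval_map]
    rfl
  · rw [Function.iterate_succ_apply']
    simp only [updFun, (hη i).1, map_add, map_mul, eval_C, eval_X, Int.cast_add, Int.cast_mul,
      intCast_eval_eq_aeval]
    rw [← Int.cast_natCast, Int.toNat_of_nonneg (hc i)]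

lemma isEventuallyNPE_eval_iterate {η : Fin d → MvPolynomial (Fin d) ℤ} (hη : IsTNN η)
    (s : MvPolynomial (Fin d) ℤ) :
    IsEventuallyNPE fun e n => ((eval ((updFun η)^[n] e) s : ℤ) : ℚ) := by
  obtain ⟨c, p, htri, hc⟩ := hη
  simpa only [intCast_eval_eq_aeval] using
    IsEventuallyNPE.aeval s fun j _ => isEventuallyNPE_iterate_apply htri hc j

section IntegerPoints

variable {σ : Type*}

lemma exists_abs_eval_le (q : MvPolynomial σ ℚ) :
    ∃ B : MvPolynomial σ ℕ, ∀ e : σ → ℤ,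
      |eval (fun i => (e i : ℚ)) q| ≤ (eval (absState e) B : ℕ) := by
  induction q using MvPolynomial.induction_on with
  | C r => exact ⟨C ⌈|r|⌉₊, fun e => by simpa using Nat.le_ceil |r|⟩
  | add p q hp hq =>
    obtain ⟨B₁, h₁⟩ := hp
    obtain ⟨B₂, h₂⟩ := hq
    refine ⟨B₁ + B₂, fun e => ?_⟩
    push_cast [map_add]
    exact (abs_add_le _ _).trans (add_le_add (h₁ e) (h₂ e))
  | mul_X p i hp =>
    obtain ⟨B, h⟩ := hp
    refine ⟨B * X i, fun e => ?_⟩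
    simp only [map_mul, eval_X, abs_mul, Nat.cast_mul, absState, Nat.cast_natAbs, Int.cast_abs]
    exact mul_le_mul_of_nonneg_right (h e) (abs_nonneg _)

lemma exists_mul_eval_eq_intCast (q : MvPolynomial σ ℚ) :
    ∃ D : ℕ, 0 < D ∧ ∀ e : σ → ℤ, ∃ z : ℤ, D * eval (fun i => (e i : ℚ)) q = z := by
  induction q using MvPolynomial.induction_on with
  | C r => exact ⟨r.den, r.den_pos, fun e => ⟨r.num, by simp [mul_comm, Rat.mul_den_eq_num]⟩⟩
  | add p q hp hq =>
    obtain ⟨D₁, hD₁, h₁⟩ := hp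
    obtain ⟨D₂, hD₂, h₂⟩ := hq
    refine ⟨D₁ * D₂, Nat.mul_pos hD₁ hD₂, fun e => ?_⟩
    obtain ⟨z₁, hz₁⟩ := h₁ e
    obtain ⟨z₂, hz₂⟩ := h₂ e
    refine ⟨D₂ * z₁ + D₁ * z₂, ?_⟩
    push_cast [map_add]
    linear_combination (D₂ : ℚ) * hz₁ + (D₁ : ℚ) * hz₂
  | mul_X p i hp =>
    obtain ⟨D, hD, h⟩ := hp
    refine ⟨D, hD, fun e => ?_⟩
    obtain ⟨z, hz⟩ := h e
    refine ⟨z * e i, ?_⟩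
    push_cast [map_mul, eval_X]
    linear_combination (e i : ℚ) * hz

lemma exists_one_le_mul_abs_eval (q : MvPolynomial σ ℚ) :
    ∃ D : ℕ, 0 < D ∧ ∀ e : σ → ℤ, eval (fun i => (e i : ℚ)) q ≠ 0 →
      1 ≤ D * |eval (fun i => (e i : ℚ)) q| := by
  obtain ⟨D, hD₀, hD⟩ := exists_mul_eval_eq_intCast q
  refine ⟨D, hD₀, fun e hq => ?_⟩
  obtain ⟨z, hz⟩ := hD e
  have hz₀ : z ≠ 0 := by
    rintro rfl
    exact hq ((mul_eq_zero.1 (hz.trans Int.cast_zero)).resolve_left (by positivity))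
  calc (1 : ℚ) ≤ |(z : ℚ)| := by exact_mod_cast Int.one_le_abs hz₀
    _ = D * |eval (fun i => (e i : ℚ)) q| := by rw [← hz, abs_mul, Nat.abs_cast]

end IntegerPoints

lemma choose_mul_pow_le_succ_pow {N k : ℕ} (hk : k ≤ N) (x : ℕ) :
    N.choose k * x ^ (N - k) ≤ (x + 1) ^ N := by
  rw [add_pow]
  calc N.choose k * x ^ (N - k) = x ^ (N - k) * 1 ^ (N - (N - k)) * N.choose (N - k) := by
        rw [Nat.choose_symm hk, one_pow, mul_one, mul_comm]
    _ ≤ _ := Finset.single_le_sum (f := fun m => x ^ m * 1 ^ (N - m) * N.choose m)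
        (fun _ _ => Nat.zero_le _) (Finset.mem_range.2 (by omega))

lemma exists_pow_succ_mul_pow_le {b' b : ℕ} (hb : b' < b) (a : ℕ) :
    ∃ C, ∀ n, n ^ (a + 1) * b' ^ n ≤ C * b ^ n := by
  refine ⟨(a + 1).factorial * b' * b ^ (a + 1), fun n => ?_⟩
  rcases n with _ | m
  · simp
  -- `n ^ (a + 1) ≤ n.ascFactorial (a + 1) = (a + 1)! * (n + a).choose (a + 1)`, and the binomial
  -- coefficient is a single term of `(b' + 1) ^ (n + a)`
  have hasc : (m + 1) ^ (a + 1) ≤ (a + 1).factorial * (m + 1 + a).choose (a + 1) := by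
    simpa [Nat.ascFactorial_eq_factorial_mul_choose'] using
      Nat.pow_succ_le_ascFactorial (m + 1) (a + 1)
  have hbin : (m + 1 + a).choose (a + 1) * b' ^ m ≤ b ^ (m + 1 + a) := by
    calc (m + 1 + a).choose (a + 1) * b' ^ m
        = (m + 1 + a).choose (a + 1) * b' ^ (m + 1 + a - (a + 1)) := by congr 2; omega
      _ ≤ (b' + 1) ^ (m + 1 + a) := choose_mul_pow_le_succ_pow (by omega) b'
      _ ≤ b ^ (m + 1 + a) := Nat.pow_le_pow_left hb _
  calc (m + 1) ^ (a + 1) * b' ^ (m + 1)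
      ≤ (a + 1).factorial * (m + 1 + a).choose (a + 1) * (b' ^ m * b') := by
        rw [pow_succ]; exact Nat.mul_le_mul_right _ hasc
    _ ≤ (a + 1).factorial * b' * b ^ (m + 1 + a) := by
        nlinarith [hbin, Nat.zero_le ((a + 1).factorial * b')]
    _ ≤ (a + 1).factorial * b' * b ^ (a + 1) * b ^ (m + 1) := by
        rw [mul_assoc _ (b ^ (a + 1)), ← pow_add]
        exact Nat.mul_le_mul_left _ (Nat.pow_le_pow_right (by omega) (by omega))

/-- `n ^ a * b ^ n` for the key `k = (b, a)`, so that the lexicographic order on keys is the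
order of growth. -/
def growthTerm (k : ℕ ×ₗ ℕ) (n : ℕ) : ℕ := n ^ (ofLex k).2 * (ofLex k).1 ^ n

lemma exists_mul_growthTerm_le {k k' : ℕ ×ₗ ℕ} (h : k < k') :
    ∃ C, ∀ n, n * growthTerm k n ≤ C * growthTerm k' n := by
  simp only [growthTerm]
  rcases Prod.Lex.lt_iff.1 h with hb | ⟨hb, ha⟩
  · obtain ⟨C, hC⟩ := exists_pow_succ_mul_pow_le hb (ofLex k).2
    refine ⟨C, fun n => ?_⟩
    rcases n with _ | n
    · simp
    calc (n + 1) * ((n + 1) ^ (ofLex k).2 * (ofLex k).1 ^ (n + 1))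
        = (n + 1) ^ ((ofLex k).2 + 1) * (ofLex k).1 ^ (n + 1) := by ring
      _ ≤ C * (ofLex k').1 ^ (n + 1) := hC _
      _ ≤ C * ((n + 1) ^ (ofLex k').2 * (ofLex k').1 ^ (n + 1)) :=
        Nat.mul_le_mul_left _ (Nat.le_mul_of_pos_left _ (by positivity))
  · refine ⟨1, fun n => ?_⟩
    rcases n with _ | n
    · simp
    rw [hb, one_mul, ← mul_assoc, ← pow_succ']
    exact Nat.mul_le_mul_right _ (Nat.pow_le_pow_right (by omega) ha)

lemma exists_mul_growthTerm_le_of_finset (s : Finset (ℕ ×ₗ ℕ)) :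
    ∃ C, ∀ k ∈ s, ∀ k' ∈ s, k < k' → ∀ n, n * growthTerm k n ≤ C * growthTerm k' n := by
  have hpair := fun k k' : ℕ ×ₗ ℕ => (em (k < k')).elim
    (fun h => (exists_mul_growthTerm_le h).imp fun C hC _ => hC)
    (fun h => ⟨0, fun h' => absurd h' h⟩)
  choose C hC using hpair
  refine ⟨∑ p ∈ s ×ˢ s, C p.1 p.2, fun k hk k' hk' h n => (hC k k' h n).trans ?_⟩
  exact Nat.mul_le_mul_right _ (Finset.single_le_sum (f := fun p => C p.1 p.2)
    (fun _ _ => Nat.zero_le _) (Finset.mem_product.2 ⟨hk, hk'⟩ : (k, k') ∈ s ×ˢ s))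

lemma sum_pos_iff_of_sum_abs_lt {ι α : Type*} [Field α] [LinearOrder α] [IsStrictOrderedRing α]
    [DecidableEq ι] {s : Finset ι} {i : ι} (hi : i ∈ s) (f : ι → α)
    (h : ∑ j ∈ s.erase i, |f j| < |f i|) : 0 < ∑ j ∈ s, f j ↔ 0 < f i := by
  rw [← Finset.add_sum_erase s f hi]
  have hrest := abs_lt.1 ((Finset.abs_sum_le_sum_abs f (s.erase i)).trans_lt h)
  rcases abs_cases (f i) with ⟨hf, -⟩ | ⟨hf, hneg⟩
  · constructor <;> intro <;> linarith
  · exact iff_of_false (by linarith) (lt_asymm hneg)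

lemma sum_mul_growthTerm_pos_iff {s : Finset (ℕ ×ₗ ℕ)} (hs : ∀ k ∈ s, 1 ≤ (ofLex k).1) {C : ℕ}
    (hC : ∀ k ∈ s, ∀ k' ∈ s, k < k' → ∀ n, n * growthTerm k n ≤ C * growthTerm k' n)
    {v : ℕ ×ₗ ℕ → ℚ} {B D : ℚ} (hB : ∀ k ∈ s, |v k| ≤ B) (hD : ∀ k ∈ s, v k ≠ 0 → 1 ≤ D * |v k|)
    {k₀ : ℕ ×ₗ ℕ} (hk₀ : k₀ ∈ s) (hv : v k₀ ≠ 0) (hmax : ∀ k ∈ s, v k ≠ 0 → k ≤ k₀) {n : ℕ}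
    (hn : s.card * C * D * B < n) :
    0 < ∑ k ∈ s, v k * growthTerm k n ↔ 0 < v k₀ := by
  have hD₀ : 0 < D := pos_of_mul_pos_left (one_pos.trans_le (hD k₀ hk₀ hv)) (abs_nonneg _)
  have hB₀ : 0 ≤ B := (abs_nonneg _).trans (hB k₀ hk₀)
  have hn₀ : (0 : ℚ) < n := lt_of_le_of_lt (by positivity) hn
  have ht₀ : (0 : ℚ) < growthTerm k₀ n := by
    have := hs k₀ hk₀
    have : 0 < n := by exact_mod_cast hn₀
    unfold growthTerm
    positivity
  have hgrowth : ∀ k ∈ s, k < k₀ → (n : ℚ) * growthTerm k n ≤ C * growthTerm k₀ n :=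
    fun k hk hlt => by exact_mod_cast hC k hk k₀ hk₀ hlt n
  rw [sum_pos_iff_of_sum_abs_lt hk₀, mul_pos_iff_of_pos_right ht₀]
  generalize (growthTerm k₀ n : ℚ) = t₀ at ht₀ hgrowth ⊢
  have hterm : ∀ k ∈ s.erase k₀, n * |v k * growthTerm k n| ≤ B * C * t₀ := by
    intro k hk
    obtain ⟨hne, hk⟩ := Finset.mem_erase.1 hk
    by_cases hvk : v k = 0
    · simp only [hvk, zero_mul, abs_zero, mul_zero]
      positivity
    rw [abs_mul, Nat.abs_cast]
    calc (n : ℚ) * (|v k| * growthTerm k n) = |v k| * (n * growthTerm k n) := by ring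
      _ ≤ B * (C * t₀) := mul_le_mul (hB k hk) (hgrowth k hk (lt_of_le_of_ne (hmax k hk hvk) hne))
        (by positivity) hB₀
      _ = B * C * t₀ := by ring
  have hsum : n * ∑ k ∈ s.erase k₀, |v k * growthTerm k n| ≤ s.card * (B * C * t₀) := by
    rw [Finset.mul_sum]
    refine (Finset.sum_le_sum hterm).trans ?_
    rw [Finset.sum_const, nsmul_eq_mul]
    exact mul_le_mul_of_nonneg_right (by exact_mod_cast Finset.card_erase_le) (by positivity)
  have hlt : D * (n * ∑ k ∈ s.erase k₀, |v k * growthTerm k n|) < D * (n * (|v k₀| * t₀)) :=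
    calc D * (n * ∑ k ∈ s.erase k₀, |v k * growthTerm k n|) ≤ D * (s.card * (B * C * t₀)) :=
          mul_le_mul_of_nonneg_left hsum hD₀.le
      _ = (s.card * C * D * B) * t₀ := by ring
      _ < n * t₀ := mul_lt_mul_of_pos_right hn ht₀
      _ ≤ n * t₀ * (D * |v k₀|) := le_mul_of_one_le_right (by positivity) (hD k₀ hk₀ hv)
      _ = D * (n * (|v k₀| * t₀)) := by ring
  rw [abs_mul, abs_of_pos ht₀]
  exact lt_of_mul_lt_mul_left (lt_of_mul_lt_mul_left hlt hD₀.le) hn₀.le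

def npeCoeffs (l : NPE d) : (ℕ ×ₗ ℕ) →₀ MvPolynomial (Fin d) ℚ :=
  (l.map fun t => Finsupp.single (toLex (t.2.2, t.2.1)) t.1).sum

lemma npeCoeffs_cons (t : MvPolynomial (Fin d) ℚ × ℕ × ℕ) (l : NPE d) :
    npeCoeffs (t :: l) = Finsupp.single (toLex (t.2.2, t.2.1)) t.1 + npeCoeffs l := by
  simp [npeCoeffs]

lemma evalNPE_eq_sum_npeCoeffs (l : NPE d) (e : Fin d → ℤ) (n : ℕ) :
    evalNPE l e n = (npeCoeffs l).sum fun k q => eval (fun i => (e i : ℚ)) q * growthTerm k n := by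
  induction l with
  | nil => simp [evalNPE, npeCoeffs]
  | cons t l ih =>
    rw [evalNPE_cons, ih, npeCoeffs_cons,
      Finsupp.sum_add_index' (by simp) (by intros; simp [add_mul]),
      Finsupp.sum_single_index (by simp)]
    simp only [growthTerm, ofLex_toLex, Nat.cast_mul, Nat.cast_pow]
    ring

lemma one_le_of_mem_support_npeCoeffs {l : NPE d} (hl : ∀ t ∈ l, 1 ≤ t.2.2) :
    ∀ k ∈ (npeCoeffs l).support, 1 ≤ (ofLex k).1 := by
  induction l with
  | nil => simp [npeCoeffs]
  | cons t l ih =>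
    intro k hk
    rw [npeCoeffs_cons] at hk
    rcases Finset.mem_union.1 (Finsupp.support_add hk) with hk | hk
    · rw [Finset.mem_singleton.1 (Finsupp.support_single_subset hk)]
      exact hl t List.mem_cons_self
    · exact ih (fun t' ht' => hl t' (List.mem_cons_of_mem t ht')) k hk

lemma exists_sign_stable_sum_npeCoeffs {l : NPE d} (hl : ∀ t ∈ l, 1 ≤ t.2.2) :
    ∃ Q : MvPolynomial (Fin d) ℕ, ∀ e, ∃ s : Prop, ∀ n ≥ eval (absState e) Q,
      (0 < (npeCoeffs l).sum (fun k q => eval (fun i => (e i : ℚ)) q * growthTerm k n) ↔ s) := by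
  set S := (npeCoeffs l).support
  choose B hB using fun k => exists_abs_eval_le (npeCoeffs l k)
  choose D hD₀ hD using fun k => exists_one_le_mul_abs_eval (npeCoeffs l k)
  obtain ⟨A, hA⟩ := exists_mul_growthTerm_le_of_finset S
  refine ⟨C (S.card * A * ∏ k ∈ S, D k) * ∑ k ∈ S, B k + 1, fun e => ?_⟩
  set v := fun k => eval (fun i => (e i : ℚ)) (npeCoeffs l k)
  by_cases hS : ∀ k ∈ S, v k = 0
  · refine ⟨False, fun n _ => iff_false_intro (lt_irrefl 0 ∘ (·.trans_eq ?_))⟩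
    exact Finset.sum_eq_zero fun k hk => by
      change v k * _ = 0
      rw [hS k hk, zero_mul]
  obtain ⟨k₁, hk₁, hv₁⟩ := not_forall₂.1 hS
  obtain ⟨k₀, hk₀, hmax⟩ :=
    (S.filter (v · ≠ 0)).exists_max_image id ⟨k₁, Finset.mem_filter.2 ⟨hk₁, hv₁⟩⟩
  refine ⟨0 < v k₀, fun n hn => ?_⟩
  obtain ⟨hk₀S, hv₀⟩ := Finset.mem_filter.1 hk₀
  have hBk : ∀ k ∈ S, |v k| ≤ (eval (absState e) (∑ k ∈ S, B k) : ℚ) := fun k hk =>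
    (hB k e).trans (by
      rw [map_sum]
      exact_mod_cast Finset.single_le_sum (f := fun k => eval (absState e) (B k))
        (fun _ _ => Nat.zero_le _) hk)
  have hDk : ∀ k ∈ S, v k ≠ 0 → 1 ≤ ((∏ k ∈ S, D k : ℕ) : ℚ) * |v k| := fun k hk hvk =>
    (hD k e hvk).trans (mul_le_mul_of_nonneg_right
      (by exact_mod_cast Finset.single_le_prod' (fun j _ => hD₀ j) hk) (abs_nonneg _))
  have hn' : S.card * A * (∏ k ∈ S, D k) * eval (absState e) (∑ k ∈ S, B k) < n := by
    simpa only [map_add, map_mul, eval_C, map_one, ge_iff_le, Nat.add_one_le_iff] using hn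
  exact sum_mul_growthTerm_pos_iff (one_le_of_mem_support_npeCoeffs hl) hA hBk hDk hk₀S hv₀
    (fun k hk hvk => hmax k (Finset.mem_filter.2 ⟨hk, hvk⟩)) (by exact_mod_cast hn')

lemma IsEventuallyNPE.exists_pos_stable {f : (Fin d → ℤ) → ℕ → ℚ} (hf : IsEventuallyNPE f) :
    ∃ Q : MvPolynomial (Fin d) ℕ, ∀ e, ∀ n ≥ eval (absState e) Q, ∀ n' ≥ eval (absState e) Q,
      (0 < f e n ↔ 0 < f e n') := by
  obtain ⟨l, n₀, hl, hf⟩ := hf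
  obtain ⟨Q, hQ⟩ := exists_sign_stable_sum_npeCoeffs hl
  refine ⟨Q + C n₀, fun e n hn n' hn' => ?_⟩
  simp only [map_add, eval_C, ge_iff_le] at hn hn'
  obtain ⟨s, hs⟩ := hQ e
  rw [hf n (by omega), hf n' (by omega), evalNPE_eq_sum_npeCoeffs, evalNPE_eq_sum_npeCoeffs,
    hs n (by omega), hs n' (by omega)]

lemma Fml.exists_holds_iterate_stable {T : (Fin d → ℤ) → Fin d → ℤ}
    (hT : ∀ s : MvPolynomial (Fin d) ℤ, IsEventuallyNPE fun e n => ((eval (T^[n] e) s : ℤ) : ℚ))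
    (φ : Fml (Fin d)) :
    ∃ Q : MvPolynomial (Fin d) ℕ, ∀ e, ∀ n ≥ eval (absState e) Q, ∀ n' ≥ eval (absState e) Q,
      (φ.holds (T^[n] e) ↔ φ.holds (T^[n'] e)) := by
  induction φ with
  | lt s₁ s₂ =>
    obtain ⟨Q, hQ⟩ := (hT (s₂ - s₁)).exists_pos_stable
    refine ⟨Q, fun e n hn n' hn' => ?_⟩
    simpa [Fml.holds] using hQ e n hn n' hn'
  | and f g hf hg =>
    obtain ⟨Q₁, hQ₁⟩ := hf
    obtain ⟨Q₂, hQ₂⟩ := hg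
    refine ⟨Q₁ + Q₂, fun e n hn n' hn' => ?_⟩
    simp only [map_add, ge_iff_le] at hn hn'
    exact and_congr (hQ₁ e n (by omega) n' (by omega)) (hQ₂ e n (by omega) n' (by omega))
  | or f g hf hg =>
    obtain ⟨Q₁, hQ₁⟩ := hf
    obtain ⟨Q₂, hQ₂⟩ := hg
    refine ⟨Q₁ + Q₂, fun e n hn n' hn' => ?_⟩
    simp only [map_add, ge_iff_le] at hn hn'
    exact or_congr (hQ₁ e n (by omega) n' (by omega)) (hQ₂ e n (by omega) n' (by omega))

/-- every terminating tnn-loop `(ψ, φ, η)` has a polynomial runtime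
bound (a polynomial with natural coefficients in the absolute values of the inputs). -/
theorem terminating_tnn_polynomial_bound {d : ℕ} (ψ φ : Fml (Fin d))
    (η : Fin d → MvPolynomial (Fin d) ℤ) (htnn : IsTNN η)
    (hinv : ∀ e : Fin d → ℤ, ψ.holds e → ψ.holds (updFun η e))
    (hterm : ¬ ∃ e : Fin d → ℤ, ψ.holds e ∧ ∀ n : ℕ, φ.holds ((updFun η)^[n] e)) :
    ∃ q : MvPolynomial (Fin d) ℕ,
      ∀ e : Fin d → ℤ, ψ.holds e → φ.holds e →
        (⨆ k ∈ {k : ℕ | ∀ i < k, φ.holds ((updFun η)^[i] e)}, (k : ℕ∞))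
          ≤ (MvPolynomial.eval (fun i => (e i).natAbs) q : ℕ∞) := by
  obtain ⟨Q, hQ⟩ := φ.exists_holds_iterate_stable (isEventuallyNPE_eval_iterate htnn)
  refine ⟨Q, fun e hψ _ => iSup₂_le fun k hk => ?_⟩
  set N := eval (absState e) Q
  -- once `φ` holds at step `N`, it holds forever after, from a state satisfying `ψ`
  have hN : ¬ φ.holds ((updFun η)^[N] e) := fun hφN =>
    hterm ⟨_, Function.Iterate.rec ψ.holds hψ hinv N, fun n => by
      rw [← Function.iterate_add_apply]
      exact (hQ e (n + N) (by omega) N le_rfl).2 hφN⟩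
  exact_mod_cast not_lt.1 fun hlt => hN (hk N hlt)

end Koat
end
end
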